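/- arXiv:2103.00546 — 7 statements merged into one kernel-verified Lean document; each statement's English description precedes it below -/
import Mathlib

section
/- For every base β > 1 and every n ≥ 1, the number of admissible words of length n in the β-expansion (i.e., prefixes of length n of β-expansions of points in [0,1)) satisfies β^n ≤ #Σ_n(β) ≤ β^{n+1}/(β-1). -/
open MeasureTheory Set
open scoped Classical

/-- The beta-transformation `T_β x = βx - ⌊βx⌋`. -/
noncomputable def betaT (β x : ℝ) : ℝ := Int.fract (β * x)

/-- The `k`-th digit (0-indexed) of the β-expansion of `x`: `ε_{k+1}(x,β) = ⌊β T_β^k x⌋`. -/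
noncomputable def betaDigit (β x : ℝ) (k : ℕ) : ℕ := ⌊β * (betaT β)^[k] x⌋₊

/-- `Σ_n(β)`: admissible words of length `n`, i.e. prefixes of β-expansions of points of `[0,1)`. -/
def admWords (β : ℝ) (n : ℕ) : Set (Fin n → ℕ) :=
  {w | ∃ x ∈ Set.Ico (0:ℝ) 1, ∀ i : Fin n, w i = betaDigit β x i}

/-- The cylinder `𝔍(w)` of points of `[0,1)` whose β-expansion starts with `w`. -/
def cyl (β : ℝ) {n : ℕ} (w : Fin n → ℕ) : Set ℝ :=
  {x | x ∈ Set.Ico (0:ℝ) 1 ∧ ∀ i : Fin n, betaDigit β x i = w i}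

/-- `Ξ_n(β)`: admissible words of length `n` whose cylinder is full (of length `β^{-n}`). -/
def fullWords (β : ℝ) (n : ℕ) : Set (Fin n → ℕ) :=
  {w | w ∈ admWords β n ∧ volume (cyl β w) = ENNReal.ofReal (1 / β ^ n)}

/-- `ε(β)`: the β-expansion of 1 (0-indexed). -/
noncomputable def eps1 (β : ℝ) (k : ℕ) : ℕ := betaDigit β 1 k

/-- `ε*(β)`: the infinite β-expansion of 1.  If `ε(β)` has a last nonzero digit at
(0-indexed) position `N`, it is the periodic sequence `(ε_0 ⋯ ε_{N-1} (ε_N - 1))^∞`;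
otherwise it is `ε(β)` itself. -/

noncomputable def epsStar (β : ℝ) : ℕ → ℕ :=
  if h : ∃ N, eps1 β N ≠ 0 ∧ ∀ k, N < k → eps1 β k = 0 then
    fun k => if k % (h.choose + 1) = h.choose then eps1 β h.choose - 1
             else eps1 β (k % (h.choose + 1))
  else eps1 β

/-- Strict lexicographic order on sequences of nonnegative integers. -/
def lexLt (a b : ℕ → ℕ) : Prop := ∃ i, (∀ j, j < i → a j = b j) ∧ a i < b i

/-- Strict lexicographic order on words of length `n`. -/
def wordLt {n : ℕ} (a b : Fin n → ℕ) : Prop :=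
  ∃ i : Fin n, (∀ j, j < i → a j = b j) ∧ a i < b i

/-- `Ω_n(x)`: all length-`n` prefixes of β-expansions of `x` over all bases `β > 1`. -/
def prefWords (x : ℝ) (n : ℕ) : Set (Fin n → ℕ) :=
  {w | ∃ β : ℝ, 1 < β ∧ ∀ i : Fin n, w i = betaDigit β x i}

/-- The parameter cylinder `I(w) = {β > 1 : ε_1(x,β)⋯ε_n(x,β) = w}`. -/
def pcyl (x : ℝ) {n : ℕ} (w : Fin n → ℕ) : Set ℝ :=
  {β | 1 < β ∧ ∀ i : Fin n, betaDigit β x i = w i}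

/-- `Λ_n(x)`: words whose parameter cylinder is full, i.e. `{T_β^n x : β ∈ I(w)} = [0,1)`. -/
def pfull (x : ℝ) (n : ℕ) : Set (Fin n → ℕ) :=
  {w | w ∈ prefWords x n ∧ (fun β => (betaT β)^[n] x) '' pcyl x w = Set.Ico (0:ℝ) 1}

/-! Each cylinder `cyl β w` is an interval starting at `wordVal β w = ∑ wᵢ β^{-(i+1)}`, of length
`ℓ_w ≤ β⁻ⁿ`, and the cylinders of length `n` partition `[0,1)`; covering `[0,1)` by them gives
`1 ≤ #Σ_n(β) β⁻ⁿ`. On `cyl β w` the map `T_β^n` is `x ↦ βⁿ (x - wordVal β w)`, so every one-letter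
extension of `w` ends with a digit `≤ βⁿ⁺¹ ℓ_w`, and there are at most `βⁿ⁺¹ ℓ_w + 1` of them.
As `∑ ℓ_w ≤ 1`, this gives `#Σ_{n+1}(β) ≤ βⁿ⁺¹ + #Σ_n(β)`, hence
`#Σ_n(β) ≤ 1 + β + ⋯ + βⁿ ≤ βⁿ⁺¹ / (β - 1)`. -/

section BetaExpansion

variable {β x : ℝ}

lemma betaT_mem_Ico (β x : ℝ) : betaT β x ∈ Ico (0 : ℝ) 1 :=
  ⟨Int.fract_nonneg _, Int.fract_lt_one _⟩

lemma iterate_betaT_mem_Ico (hx : x ∈ Ico (0 : ℝ) 1) : ∀ k, (betaT β)^[k] x ∈ Ico (0 : ℝ) 1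
  | 0 => hx
  | k + 1 => by rw [Function.iterate_succ_apply']; exact betaT_mem_Ico β _

lemma betaDigit_succ (β x : ℝ) (k : ℕ) : betaDigit β x (k + 1) = betaDigit β (betaT β x) k := by
  rw [betaDigit, betaDigit, Function.iterate_succ_apply]

lemma betaT_eq_sub_betaDigit (hβx : 0 ≤ β * x) : betaT β x = β * x - betaDigit β x 0 := by
  rw [betaDigit, Function.iterate_zero_apply, natCast_floor_eq_intCast_floor hβx, betaT,
    ← Int.self_sub_floor]

lemma betaDigit_le_floor (hβ : 0 ≤ β) (hx : x ∈ Ico (0 : ℝ) 1) (k : ℕ) :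
    betaDigit β x k ≤ ⌊β⌋₊ := by
  obtain ⟨-, h1⟩ := iterate_betaT_mem_Ico (β := β) hx k
  exact Nat.floor_le_floor (mul_le_of_le_one_right hβ h1.le)

noncomputable def wordVal (β : ℝ) {n : ℕ} (w : Fin n → ℕ) : ℝ :=
  ∑ i : Fin n, (w i : ℝ) / β ^ ((i : ℕ) + 1)

noncomputable def digitWord (β x : ℝ) (n : ℕ) : Fin n → ℕ := fun i => betaDigit β x i

lemma wordVal_nonneg (hβ : 0 ≤ β) {n : ℕ} (w : Fin n → ℕ) : 0 ≤ wordVal β w :=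
  Finset.sum_nonneg fun _ _ => by positivity

lemma wordVal_cons (β : ℝ) {n : ℕ} (a : ℕ) (w : Fin n → ℕ) :
    wordVal β (Fin.cons a w : Fin (n + 1) → ℕ) = (a + wordVal β w) / β := by
  simp only [wordVal, Fin.sum_univ_succ, Fin.cons_zero, Fin.cons_succ, Fin.val_zero,
    Fin.val_succ, add_div, Finset.sum_div, div_div, ← pow_succ]
  simp

lemma digitWord_succ (β x : ℝ) (n : ℕ) :
    digitWord β x (n + 1) = Fin.cons (betaDigit β x 0) (digitWord β (betaT β x) n) := by
  funext i
  refine Fin.cases rfl (fun i => ?_) i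
  simp [digitWord, betaDigit_succ]

lemma wordVal_digitWord_add_div (hβ : 0 < β) (hx : 0 ≤ x) (n : ℕ) :
    wordVal β (digitWord β x n) + (betaT β)^[n] x / β ^ n = x := by
  induction n generalizing x with
  | zero => simp [wordVal]
  | succ n ih =>
    have hT := betaT_eq_sub_betaDigit (mul_nonneg hβ.le hx)
    have ih' := ih (betaT_mem_Ico β x).1
    rw [digitWord_succ, wordVal_cons, Function.iterate_succ_apply, pow_succ, ← div_div,
      ← add_div, add_assoc, ih', hT, add_sub_cancel, mul_div_cancel_left₀ _ hβ.ne']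

lemma digitWord_eq_of_le_of_le {y : ℝ} (hβ : 0 < β) (hx : 0 ≤ x) {n : ℕ}
    (hy : wordVal β (digitWord β x n) ≤ y) (hyx : y ≤ x) : digitWord β y n = digitWord β x n := by
  induction n generalizing x y with
  | zero => exact Subsingleton.elim _ _
  | succ n ih =>
    set d := betaDigit β x 0
    have hy0 : 0 ≤ y := (wordVal_nonneg hβ.le _).trans hy
    have hTx := betaT_eq_sub_betaDigit (mul_nonneg hβ.le hx)
    have hlow : d + wordVal β (digitWord β (betaT β x) n) ≤ β * y := by
      rw [digitWord_succ, wordVal_cons, div_le_iff₀ hβ] at hy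
      linarith
    have hβyx : β * y ≤ β * x := by gcongr
    have hdy : betaDigit β y 0 = d := by
      have := (betaT_mem_Ico β x).2
      have := wordVal_nonneg hβ.le (digitWord β (betaT β x) n)
      rw [betaDigit, Function.iterate_zero_apply, Nat.floor_eq_iff (mul_nonneg hβ.le hy0)]
      constructor <;> linarith
    have hTy : betaT β y = β * y - d := by rw [betaT_eq_sub_betaDigit (by positivity), hdy]
    have htail := ih (betaT_mem_Ico β x).1 (by linarith) (y := betaT β y)
      (by rw [hTy, hTx]; linarith)
    rw [digitWord_succ, digitWord_succ, hdy, htail]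

lemma mem_admWords_iff {n : ℕ} {w : Fin n → ℕ} : w ∈ admWords β n ↔ (cyl β w).Nonempty :=
  ⟨fun ⟨x, hx, h⟩ => ⟨x, hx, fun i => (h i).symm⟩,
    fun ⟨x, hx, h⟩ => ⟨x, hx, fun i => (h i).symm⟩⟩

lemma mem_cyl_iff {n : ℕ} {w : Fin n → ℕ} :
    x ∈ cyl β w ↔ x ∈ Ico (0 : ℝ) 1 ∧ digitWord β x n = w := by
  simp [cyl, digitWord, funext_iff]

lemma cyl_subset_cyl_init {n : ℕ} (u : Fin (n + 1) → ℕ) : cyl β u ⊆ cyl β (Fin.init u) :=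
  fun _ hx => ⟨hx.1, fun i => hx.2 i.castSucc⟩

lemma cyl_subset_Ico (hβ : 0 < β) {n : ℕ} (w : Fin n → ℕ) :
    cyl β w ⊆ Ico (wordVal β w) (wordVal β w + (β ^ n)⁻¹) := by
  intro x hx
  obtain ⟨hx01, rfl⟩ := mem_cyl_iff.1 hx
  have hsum := wordVal_digitWord_add_div hβ hx01.1 n
  obtain ⟨h0, h1⟩ := iterate_betaT_mem_Ico (β := β) hx01 n
  have hpos : 0 < β ^ n := pow_pos hβ n
  have : (betaT β)^[n] x / β ^ n < (β ^ n)⁻¹ := by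
    rwa [div_lt_iff₀ hpos, inv_mul_cancel₀ hpos.ne']
  constructor <;> linarith [div_nonneg h0 hpos.le]

lemma Icc_subset_cyl (hβ : 0 < β) {n : ℕ} {w : Fin n → ℕ} (hx : x ∈ cyl β w) :
    Icc (wordVal β w) x ⊆ cyl β w := by
  obtain ⟨hx01, rfl⟩ := mem_cyl_iff.1 hx
  intro y hy
  refine mem_cyl_iff.2 ⟨⟨(wordVal_nonneg hβ.le _).trans hy.1, hy.2.trans_lt hx01.2⟩, ?_⟩
  exact digitWord_eq_of_le_of_le hβ hx01.1 hy.1 hy.2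

lemma ordConnected_cyl (hβ : 0 < β) {n : ℕ} (w : Fin n → ℕ) : (cyl β w).OrdConnected :=
  ⟨fun _ hx _ hz _ hy => Icc_subset_cyl hβ hz ⟨(cyl_subset_Ico hβ w hx).1.trans hy.1, hy.2⟩⟩

lemma pairwise_disjoint_cyl (β : ℝ) (n : ℕ) :
    Pairwise fun w w' : Fin n → ℕ => Disjoint (cyl β w) (cyl β w') :=
  fun _ _ hne => Set.disjoint_left.2 fun _ hx hx' =>
    hne ((mem_cyl_iff.1 hx).2.symm.trans (mem_cyl_iff.1 hx').2)

lemma volume_cyl_ne_top {n : ℕ} (w : Fin n → ℕ) : volume (cyl β w) ≠ ⊤ :=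
  measure_ne_top_of_subset (fun _ hx => hx.1) (by simp)

lemma admWords_finite (hβ : 0 ≤ β) (n : ℕ) : (admWords β n).Finite := by
  refine (Set.Finite.pi fun _ : Fin n => Set.finite_Iic ⌊β⌋₊).subset ?_
  rintro w ⟨x, hx, hw⟩ i -
  exact (hw i).trans_le (betaDigit_le_floor hβ hx i)

lemma pow_le_ncard_admWords (hβ : 0 < β) (n : ℕ) : β ^ n ≤ (admWords β n).ncard := by
  set s := (admWords_finite hβ.le n).toFinset
  have hpos : 0 < β ^ n := pow_pos hβ n
  have hcover : Ico (0 : ℝ) 1 ⊆ ⋃ w ∈ s, Ico (wordVal β w) (wordVal β w + (β ^ n)⁻¹) := by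
    intro x hx
    have hxw : x ∈ cyl β (digitWord β x n) := mem_cyl_iff.2 ⟨hx, rfl⟩
    exact Set.mem_biUnion ((Set.Finite.mem_toFinset _).2 (mem_admWords_iff.2 ⟨x, hxw⟩))
      (cyl_subset_Ico hβ _ hxw)
  have hvol := (measureReal_mono hcover
    (measure_biUnion_lt_top s.finite_toSet fun _ _ => measure_Ico_lt_top).ne).trans
    (measureReal_biUnion_finset_le (μ := volume) s _)
  simp only [Real.volume_real_Ico_of_le zero_le_one, sub_zero, add_sub_cancel_left,
    Real.volume_real_Ico_of_le (le_add_of_nonneg_right (inv_nonneg.2 hpos.le)),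
    Finset.sum_const, nsmul_eq_mul] at hvol
  rw [Set.ncard_eq_toFinset_card _ (admWords_finite hβ.le n)]
  rwa [le_mul_inv_iff₀ hpos, one_mul] at hvol

lemma sum_volume_cyl_le_one {n : ℕ} (hβ : 0 < β) (s : Finset (Fin n → ℕ)) :
    ∑ w ∈ s, volume.real (cyl β w) ≤ 1 := by
  rw [← measureReal_biUnion_finset ((pairwise_disjoint_cyl β n).set_pairwise _)
    (fun w _ => (ordConnected_cyl hβ w).measurableSet) (fun w _ => volume_cyl_ne_top w)]
  calc volume.real (⋃ w ∈ s, cyl β w) ≤ volume.real (Ico (0 : ℝ) 1) :=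
        measureReal_mono (Set.iUnion₂_subset fun _ _ _ hx => hx.1) (by simp)
    _ = 1 := by simp

lemma betaDigit_le_of_mem_cyl (hβ : 0 < β) {n : ℕ} {w : Fin n → ℕ} (hx : x ∈ cyl β w) :
    (betaDigit β x n : ℝ) ≤ β ^ (n + 1) * volume.real (cyl β w) := by
  have hx' := mem_cyl_iff.1 hx
  have hsum := wordVal_digitWord_add_div hβ hx'.1.1 n
  rw [hx'.2] at hsum
  have hle : x - wordVal β w ≤ volume.real (cyl β w) := by
    have := measureReal_mono (μ := volume) (Icc_subset_cyl hβ hx) (volume_cyl_ne_top w)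
    rwa [Real.volume_real_Icc_of_le (cyl_subset_Ico hβ w hx).1] at this
  have hT : (betaT β)^[n] x = β ^ n * (x - wordVal β w) := by
    field_simp at hsum
    linarith
  calc (betaDigit β x n : ℝ) ≤ β * (betaT β)^[n] x :=
        Nat.floor_le (mul_nonneg hβ.le (iterate_betaT_mem_Ico hx'.1 n).1)
    _ = β ^ (n + 1) * (x - wordVal β w) := by rw [hT, pow_succ]; ring
    _ ≤ β ^ (n + 1) * volume.real (cyl β w) := by gcongr

lemma card_le_of_forall_init_eq (hβ : 0 < β) {n : ℕ} (w : Fin n → ℕ)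
    (t : Finset (Fin (n + 1) → ℕ)) (ht : ∀ u ∈ t, u ∈ admWords β (n + 1) ∧ Fin.init u = w) :
    (t.card : ℝ) ≤ β ^ (n + 1) * volume.real (cyl β w) + 1 := by
  set B := β ^ (n + 1) * volume.real (cyl β w)
  have hmaps : ∀ u ∈ t, u (Fin.last n) ∈ Finset.range (⌊B⌋₊ + 1) := by
    intro u hu
    obtain ⟨x, hx⟩ := mem_admWords_iff.1 (ht u hu).1
    have hxw : x ∈ cyl β w := (ht u hu).2 ▸ cyl_subset_cyl_init u hx
    rw [Finset.mem_range, Nat.lt_succ_iff, ← hx.2 (Fin.last n)]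
    exact Nat.le_floor (betaDigit_le_of_mem_cyl hβ hxw)
  have hinj : Set.InjOn (fun u : Fin (n + 1) → ℕ => u (Fin.last n)) t := by
    intro u hu u' hu' h
    rw [← Fin.snoc_init_self u, ← Fin.snoc_init_self u', (ht u hu).2, (ht u' hu').2]
    exact congrArg _ h
  have hcard := Finset.card_le_card_of_injOn _ hmaps hinj
  rw [Finset.card_range] at hcard
  calc (t.card : ℝ) ≤ (⌊B⌋₊ : ℝ) + 1 := by exact_mod_cast hcard
    _ ≤ B + 1 := by gcongr; exact Nat.floor_le (by positivity)

lemma ncard_admWords_succ_le (hβ : 0 < β) (n : ℕ) :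
    ((admWords β (n + 1)).ncard : ℝ) ≤ β ^ (n + 1) + (admWords β n).ncard := by
  classical
  set s := (admWords_finite hβ.le n).toFinset
  set s' := (admWords_finite hβ.le (n + 1)).toFinset
  have hmaps : (s' : Set (Fin (n + 1) → ℕ)).MapsTo Fin.init s := by
    intro u hu
    simp only [s, s', Finset.mem_coe, Set.Finite.mem_toFinset, mem_admWords_iff] at hu ⊢
    exact hu.mono (cyl_subset_cyl_init u)
  have hfiber : ∀ w ∈ s, (({u ∈ s' | Fin.init u = w} : Finset _).card : ℝ)
      ≤ β ^ (n + 1) * volume.real (cyl β w) + 1 := fun w _ =>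
    card_le_of_forall_init_eq hβ w _ fun u hu => by
      simpa only [s', Finset.mem_filter, Set.Finite.mem_toFinset] using hu
  rw [Set.ncard_eq_toFinset_card _ (admWords_finite hβ.le n),
    Set.ncard_eq_toFinset_card _ (admWords_finite hβ.le (n + 1)),
    Finset.card_eq_sum_card_fiberwise hmaps]
  push_cast
  calc ∑ w ∈ s, (({u ∈ s' | Fin.init u = w} : Finset _).card : ℝ)
      ≤ ∑ w ∈ s, (β ^ (n + 1) * volume.real (cyl β w) + 1) := Finset.sum_le_sum hfiber
    _ = β ^ (n + 1) * ∑ w ∈ s, volume.real (cyl β w) + s.card := by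
        rw [Finset.sum_add_distrib, ← Finset.mul_sum, Finset.sum_const, nsmul_one]
    _ ≤ β ^ (n + 1) + s.card := by
        gcongr
        exact mul_le_of_le_one_right (by positivity) (sum_volume_cyl_le_one hβ s)

lemma ncard_admWords_le_geom_sum (hβ : 0 < β) (n : ℕ) :
    ((admWords β n).ncard : ℝ) ≤ ∑ k ∈ Finset.range (n + 1), β ^ k := by
  induction n with
  | zero => simpa using Set.ncard_le_one_of_subsingleton (admWords β 0)
  | succ n ih =>
    rw [Finset.sum_range_succ]
    linarith [ncard_admWords_succ_le hβ n]

end BetaExpansion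

theorem card_admWords_bounds_general (β : ℝ) (hβ : 1 < β) (n : ℕ) :
    β ^ n ≤ ((admWords β n).ncard : ℝ) ∧
      ((admWords β n).ncard : ℝ) ≤ β ^ (n + 1) / (β - 1) := by
  have hβ0 : 0 < β := zero_lt_one.trans hβ
  refine ⟨pow_le_ncard_admWords hβ0 n, (ncard_admWords_le_geom_sum hβ0 n).trans ?_⟩
  rw [geom_sum_eq hβ.ne' (n + 1)]
  gcongr
  linarith

theorem card_admWords_bounds (β : ℝ) (hβ : 1 < β) (n : ℕ) (hn : 1 ≤ n) :
    β ^ n ≤ ((admWords β n).ncard : ℝ) ∧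
      ((admWords β n).ncard : ℝ) ≤ β ^ (n + 1) / (β - 1) :=
  card_admWords_bounds_general β hβ n
end

section
/- A sequence ξ = ξ₁ξ₂⋯ of nonnegative integers is the β-expansion of some x ∈ [0,1) in base β if and only if σ^i ξ ≺ ε*(β) (strictly lexicographically less) for all i ≥ 0, where σ is the shift map. -/
open MeasureTheory Set
open scoped Classical

/-!
Write `digitSum β a = ∑ aₖ β^-(k+1)`. The greedy digits `d(x)` of `x ∈ [0, 1]` satisfy
`digitSum β (σᵐ d(x)) = T_βᵐ x`, and `ε*(β)` has digit sum `1` while each of its tails has digit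
sum in `(0, 1]`: it is some `T_βʳ 1 > 0`. Lexicographic comparison then turns into comparison of
digit sums. If `σⁱ d(x) ⪰ ε*(β)` then `T_βⁱ x ≥ digitSum β ε*(β) = 1`, which is impossible.
Conversely, if every shift of `ξ` is below `ε*(β)`, the tail sums `gⱼ = digitSum β (σʲ ξ)` satisfy
`gⱼ ≤ (a partial sum of ε*, which is < 1) + (g_{j+i+1} - 1) β^-(i+1)`; this forces `sup g ≤ 1`,
hence every `gⱼ < 1`, and then `x = g₀` has `T_βʲ x = gⱼ` and digits `ξ`.
-/

open Filter Topology

namespace BetaExpansion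

variable {β x : ℝ} {a b : ℕ → ℕ}

def shift (a : ℕ → ℕ) (m : ℕ) : ℕ → ℕ := fun k => a (m + k)

@[simp] lemma shift_apply (a : ℕ → ℕ) (m k : ℕ) : shift a m k = a (m + k) := rfl

lemma shift_shift (a : ℕ → ℕ) (m n : ℕ) : shift (shift a m) n = shift a (m + n) :=
  funext fun k => by simp [add_assoc]

noncomputable def digitSum (β : ℝ) (a : ℕ → ℕ) : ℝ := ∑' k, (a k : ℝ) / β ^ (k + 1)

noncomputable def partialDigitSum (β : ℝ) (a : ℕ → ℕ) (n : ℕ) : ℝ :=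
  ∑ k ∈ Finset.range n, (a k : ℝ) / β ^ (k + 1)

def DigitsLE (β : ℝ) (a : ℕ → ℕ) : Prop := ∀ k, (a k : ℝ) ≤ β

lemma DigitsLE.shift (ha : DigitsLE β a) (m : ℕ) : DigitsLE β (shift a m) := fun _ => ha _

section Transformation

lemma betaT_mem_Ico (β x : ℝ) : betaT β x ∈ Ico (0 : ℝ) 1 :=
  ⟨Int.fract_nonneg _, Int.fract_lt_one _⟩

lemma betaT_iterate_mem_Ico (hx : x ∈ Ico (0 : ℝ) 1) : ∀ k, (betaT β)^[k] x ∈ Ico (0 : ℝ) 1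
  | 0 => hx
  | k + 1 => by rw [Function.iterate_succ_apply']; exact betaT_mem_Ico β _

lemma betaT_iterate_mem_Icc (hx : x ∈ Icc (0 : ℝ) 1) : ∀ k, (betaT β)^[k] x ∈ Icc (0 : ℝ) 1
  | 0 => hx
  | k + 1 => by
    rw [Function.iterate_succ_apply']; exact Ico_subset_Icc_self (betaT_mem_Ico β _)

lemma betaT_iterate_succ (hβ : 0 ≤ β) (hx : x ∈ Icc (0 : ℝ) 1) (k : ℕ) :
    (betaT β)^[k + 1] x = β * (betaT β)^[k] x - betaDigit β x k := by
  rw [Function.iterate_succ_apply', betaT, Int.fract, betaDigit,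
    natCast_floor_eq_intCast_floor (mul_nonneg hβ (betaT_iterate_mem_Icc hx k).1)]

lemma digitsLE_betaDigit (hβ : 0 ≤ β) (hx : x ∈ Icc (0 : ℝ) 1) :
    DigitsLE β (betaDigit β x) := fun k => by
  obtain ⟨h0, h1⟩ := betaT_iterate_mem_Icc (β := β) hx k
  calc (betaDigit β x k : ℝ) ≤ β * (betaT β)^[k] x := Nat.floor_le (mul_nonneg hβ h0)
    _ ≤ β := mul_le_of_le_one_right hβ h1

lemma shift_betaDigit (β x : ℝ) (m : ℕ) :
    shift (betaDigit β x) m = betaDigit β ((betaT β)^[m] x) := by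
  funext k
  rw [shift_apply, betaDigit, betaDigit, add_comm, Function.iterate_add_apply]

lemma betaDigit_eq_zero_of_iterate_eq_zero {r k : ℕ} (h : (betaT β)^[r] x = 0) (hrk : r ≤ k) :
    betaDigit β x k = 0 := by
  obtain ⟨j, rfl⟩ := exists_add_of_le hrk
  have hfix : betaT β 0 = 0 := by simp [betaT]
  rw [← shift_apply (betaDigit β x) r j, shift_betaDigit, h, betaDigit,
    Function.iterate_fixed hfix]
  simp

lemma betaT_iterate_pos_of_betaDigit_ne_zero (hx : x ∈ Icc (0 : ℝ) 1) {r k : ℕ} (hrk : r ≤ k)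
    (hk : betaDigit β x k ≠ 0) : 0 < (betaT β)^[r] x :=
  (betaT_iterate_mem_Icc hx r).1.lt_of_ne' fun h => hk (betaDigit_eq_zero_of_iterate_eq_zero h hrk)

lemma betaDigit_eq_of_mul_eq {y : ℕ → ℝ} {d : ℕ → ℕ} (hy : ∀ n, y n ∈ Ico (0 : ℝ) 1)
    (hd : ∀ n, β * y n = d n + y (n + 1)) (n : ℕ) : betaDigit β (y 0) n = d n := by
  have hiter : ∀ n, (betaT β)^[n] (y 0) = y n := by
    intro n
    induction n with
    | zero => rfl
    | succ n ih =>
      rw [Function.iterate_succ_apply', ih, betaT, hd, ← Int.cast_natCast, Int.fract_intCast_add,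
        Int.fract_eq_self.mpr (hy _)]
  rw [betaDigit, hiter, hd, add_comm, Nat.floor_add_natCast (hy _).1,
    Nat.floor_eq_zero.mpr (hy _).2, zero_add]

end Transformation

section DigitSum

lemma DigitsLE.div_pow_succ_le (ha : DigitsLE β a) (hβ : 0 < β) (k : ℕ) :
    (a k : ℝ) / β ^ (k + 1) ≤ β⁻¹ ^ k :=
  calc (a k : ℝ) / β ^ (k + 1) ≤ β / β ^ (k + 1) := by gcongr; exact ha k
    _ = β⁻¹ ^ k := by rw [pow_succ, div_mul_cancel_right₀ hβ.ne', inv_pow]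

lemma DigitsLE.summable (hβ : 1 < β) (ha : DigitsLE β a) :
    Summable fun k => (a k : ℝ) / β ^ (k + 1) := by
  have hβ0 : 0 < β := by linarith
  exact (summable_geometric_of_lt_one (inv_nonneg.2 hβ0.le)
    (inv_lt_one_of_one_lt₀ hβ)).of_nonneg_of_le (fun k => by positivity) (ha.div_pow_succ_le hβ0)

lemma partialDigitSum_succ (β : ℝ) (a : ℕ → ℕ) (n : ℕ) :
    partialDigitSum β a (n + 1) = partialDigitSum β a n + a n / β ^ (n + 1) :=
  Finset.sum_range_succ _ _

lemma partialDigitSum_congr {n : ℕ} (h : ∀ k < n, a k = b k) :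
    partialDigitSum β a n = partialDigitSum β b n :=
  Finset.sum_congr rfl fun k hk => by rw [h k (Finset.mem_range.1 hk)]

lemma digitSum_nonneg (hβ : 0 ≤ β) (a : ℕ → ℕ) : 0 ≤ digitSum β a :=
  tsum_nonneg fun _ => div_nonneg (Nat.cast_nonneg _) (pow_nonneg hβ _)

lemma digitSum_le (hβ : 1 < β) (ha : DigitsLE β a) : digitSum β a ≤ (1 - β⁻¹)⁻¹ := by
  have hβ0 : 0 < β := by linarith
  rw [← tsum_geometric_of_lt_one (inv_nonneg.2 hβ0.le) (inv_lt_one_of_one_lt₀ hβ)]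
  exact (ha.summable hβ).tsum_le_tsum (ha.div_pow_succ_le hβ0)
    (summable_geometric_of_lt_one (inv_nonneg.2 hβ0.le) (inv_lt_one_of_one_lt₀ hβ))

lemma digitSum_eq_partialDigitSum_add (hβ : 1 < β) (ha : DigitsLE β a) (n : ℕ) :
    digitSum β a = partialDigitSum β a n + digitSum β (shift a n) / β ^ n := by
  rw [digitSum, ← (ha.summable hβ).sum_add_tsum_nat_add n, partialDigitSum, digitSum,
    ← tsum_div_const]
  congr 1
  refine tsum_congr fun k => ?_
  rw [shift_apply, div_div, ← pow_add, add_comm n k, add_right_comm]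

lemma partialDigitSum_le_digitSum (hβ : 1 < β) (ha : DigitsLE β a) (n : ℕ) :
    partialDigitSum β a n ≤ digitSum β a := by
  rw [digitSum_eq_partialDigitSum_add hβ ha n]
  have := digitSum_nonneg (by linarith) (shift a n)
  have : 0 < β ^ n := pow_pos (by linarith) n
  simp only [le_add_iff_nonneg_right]
  positivity

lemma mul_digitSum (hβ : 1 < β) (ha : DigitsLE β a) :
    β * digitSum β a = a 0 + digitSum β (shift a 1) := by
  rw [digitSum_eq_partialDigitSum_add hβ ha 1, partialDigitSum, Finset.sum_range_one]
  field_simp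
  ring

lemma digitSum_shift_eq_of_eqOn (hβ : 1 < β) (ha : DigitsLE β a) (hb : DigitsLE β b) {m : ℕ}
    (hab : ∀ k < m, a k = b k) (h : digitSum β a = digitSum β b) :
    digitSum β (shift a m) = digitSum β (shift b m) := by
  rw [digitSum_eq_partialDigitSum_add hβ ha m, digitSum_eq_partialDigitSum_add hβ hb m,
    partialDigitSum_congr hab] at h
  have : β ^ m ≠ 0 := pow_ne_zero m (by linarith)
  field_simp at h
  linarith

lemma eq_partialDigitSum_betaDigit_add (hβ : 0 < β) (hx : x ∈ Icc (0 : ℝ) 1) (n : ℕ) :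
    x = partialDigitSum β (betaDigit β x) n + (betaT β)^[n] x / β ^ n := by
  induction n with
  | zero => simp [partialDigitSum]
  | succ n ih =>
    rw [partialDigitSum_succ, betaT_iterate_succ hβ.le hx n]
    nth_rw 1 [ih]
    field_simp
    ring

lemma digitSum_betaDigit (hβ : 1 < β) (hx : x ∈ Icc (0 : ℝ) 1) :
    digitSum β (betaDigit β x) = x := by
  have hβ0 : 0 < β := by linarith
  refine HasSum.tsum_eq <| (hasSum_iff_tendsto_nat_of_nonneg (fun k => by positivity) x).2 ?_
  have hrem : Tendsto (fun n => (betaT β)^[n] x / β ^ n) atTop (𝓝 0) := by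
    refine squeeze_zero (fun n => div_nonneg (betaT_iterate_mem_Icc hx n).1 (by positivity))
      (fun n => ?_) (tendsto_pow_atTop_nhds_zero_of_lt_one (inv_nonneg.2 hβ0.le)
        (inv_lt_one_of_one_lt₀ hβ))
    rw [inv_pow, div_eq_mul_inv]
    exact mul_le_of_le_one_left (by positivity) (betaT_iterate_mem_Icc hx n).2
  convert tendsto_const_nhds.sub hrem using 1
  · funext n
    rw [eq_sub_iff_add_eq, ← partialDigitSum, ← eq_partialDigitSum_betaDigit_add hβ0 hx]
  · rw [sub_zero]

lemma digitSum_shift_betaDigit (hβ : 1 < β) (hx : x ∈ Icc (0 : ℝ) 1) (m : ℕ) :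
    digitSum β (shift (betaDigit β x) m) = (betaT β)^[m] x := by
  rw [shift_betaDigit, digitSum_betaDigit hβ (betaT_iterate_mem_Icc hx m)]

end DigitSum

section Lex

lemma head_le_of_lexLt (h : lexLt a b) : a 0 ≤ b 0 := by
  obtain ⟨i, hagree, hlt⟩ := h
  rcases i.eq_zero_or_pos with rfl | hi
  · exact hlt.le
  · exact (hagree 0 hi).le

lemma partialDigitSum_add_le_of_lt (hβ : 0 < β) {i : ℕ} (hagree : ∀ j < i, a j = b j)
    (hlt : a i < b i) :
    partialDigitSum β a (i + 1) + 1 / β ^ (i + 1) ≤ partialDigitSum β b (i + 1) := by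
  have hdigit : (a i : ℝ) + 1 ≤ b i := by exact_mod_cast hlt
  rw [partialDigitSum_succ, partialDigitSum_succ, partialDigitSum_congr hagree, add_assoc,
    ← add_div]
  gcongr

lemma exists_digitSum_le_of_lexLt (hβ : 1 < β) (ha : DigitsLE β a) (h : lexLt a b) :
    ∃ i, digitSum β a ≤
      partialDigitSum β b (i + 1) + (digitSum β (shift a (i + 1)) - 1) / β ^ (i + 1) := by
  obtain ⟨i, hagree, hlt⟩ := h
  refine ⟨i, ?_⟩
  have := partialDigitSum_add_le_of_lt (by linarith) hagree hlt
  rw [digitSum_eq_partialDigitSum_add hβ ha (i + 1), sub_div]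
  linarith

lemma digitSum_le_of_lexLt (hβ : 1 < β) (ha : DigitsLE β a) (hb : DigitsLE β b) (h : lexLt a b)
    (htail : ∀ m, digitSum β (shift a m) ≤ 1) : digitSum β a ≤ digitSum β b := by
  obtain ⟨i, hi⟩ := exists_digitSum_le_of_lexLt hβ ha h
  have : (digitSum β (shift a (i + 1)) - 1) / β ^ (i + 1) ≤ 0 :=
    div_nonpos_of_nonpos_of_nonneg (by linarith [htail (i + 1)]) (pow_nonneg (by linarith) _)
  linarith [partialDigitSum_le_digitSum hβ hb (i + 1)]

end Lex

section EpsStar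

def IsLastNonzero (f : ℕ → ℕ) (N : ℕ) : Prop := f N ≠ 0 ∧ ∀ k, N < k → f k = 0

lemma IsLastNonzero.unique {f : ℕ → ℕ} {N M : ℕ} (hN : IsLastNonzero f N)
    (hM : IsLastNonzero f M) : N = M := by
  by_contra hne
  rcases Nat.lt_or_gt_of_ne hne with h | h
  · exact hM.1 (hN.2 M h)
  · exact hN.1 (hM.2 N h)

lemma exists_isLastNonzero {f : ℕ → ℕ} {r : ℕ} (h0 : f 0 ≠ 0) (hr : ∀ k, r ≤ k → f k = 0) :
    ∃ N, IsLastNonzero f N := by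
  refine ⟨Nat.findGreatest (f · ≠ 0) r,
    Nat.findGreatest_spec (P := (f · ≠ 0)) (Nat.zero_le r) h0, fun k hk => ?_⟩
  by_contra hne
  rcases le_or_gt r k with h | h
  · exact hne (hr k h)
  · exact Nat.findGreatest_is_greatest hk h.le hne

lemma eps1_zero_ne_zero (hβ : 1 ≤ β) : eps1 β 0 ≠ 0 :=
  Nat.pos_iff_ne_zero.1 <| Nat.floor_pos.2 <| by simpa using hβ

lemma digitsLE_eps1 (hβ : 0 ≤ β) : DigitsLE β (eps1 β) :=
  digitsLE_betaDigit hβ ⟨zero_le_one, le_rfl⟩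

lemma digitSum_eps1 (hβ : 1 < β) : digitSum β (eps1 β) = 1 :=
  digitSum_betaDigit hβ ⟨zero_le_one, le_rfl⟩

lemma digitSum_shift_eps1 (hβ : 1 < β) (m : ℕ) :
    digitSum β (shift (eps1 β) m) = (betaT β)^[m] 1 :=
  digitSum_shift_betaDigit hβ ⟨zero_le_one, le_rfl⟩ m

lemma epsStar_apply_of_isLastNonzero {N : ℕ} (hN : IsLastNonzero (eps1 β) N) (k : ℕ) :
    epsStar β k = if k % (N + 1) = N then eps1 β N - 1 else eps1 β (k % (N + 1)) := by
  have h : ∃ N, eps1 β N ≠ 0 ∧ ∀ k, N < k → eps1 β k = 0 := ⟨N, hN⟩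
  have hchoose : h.choose = N := IsLastNonzero.unique h.choose_spec hN
  rw [epsStar, dif_pos h, hchoose]

lemma epsStar_of_not_exists_isLastNonzero (h : ¬∃ N, IsLastNonzero (eps1 β) N) :
    epsStar β = eps1 β :=
  dif_neg h

lemma epsStar_periodic {N : ℕ} (hN : IsLastNonzero (eps1 β) N) :
    Function.Periodic (epsStar β) (N + 1) := fun k => by
  simp only [epsStar_apply_of_isLastNonzero hN, Nat.add_mod_right]

lemma epsStar_of_lt {N k : ℕ} (hN : IsLastNonzero (eps1 β) N) (hk : k < N) :
    epsStar β k = eps1 β k := by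
  rw [epsStar_apply_of_isLastNonzero hN, Nat.mod_eq_of_lt (by omega), if_neg hk.ne]

lemma epsStar_self {N : ℕ} (hN : IsLastNonzero (eps1 β) N) : epsStar β N = eps1 β N - 1 := by
  rw [epsStar_apply_of_isLastNonzero hN, Nat.mod_eq_of_lt N.lt_succ_self, if_pos rfl]

lemma shift_epsStar_mod {N : ℕ} (hN : IsLastNonzero (eps1 β) N) (m : ℕ) :
    shift (epsStar β) m = shift (epsStar β) (m % (N + 1)) := by
  funext k
  simp only [shift_apply]
  rw [← (epsStar_periodic hN).map_mod_nat (m + k),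
    ← (epsStar_periodic hN).map_mod_nat (m % (N + 1) + k), Nat.mod_add_mod]

lemma digitsLE_epsStar_of_isLastNonzero (hβ : 0 ≤ β) {N : ℕ} (hN : IsLastNonzero (eps1 β) N) :
    DigitsLE β (epsStar β) := fun k => by
  rw [epsStar_apply_of_isLastNonzero hN]
  split_ifs
  · exact (Nat.cast_le.2 (Nat.sub_le _ _)).trans (digitsLE_eps1 hβ N)
  · exact digitsLE_eps1 hβ _

lemma partialDigitSum_eps1_of_isLastNonzero (hβ : 1 < β) {N : ℕ}
    (hN : IsLastNonzero (eps1 β) N) : partialDigitSum β (eps1 β) (N + 1) = 1 := by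
  have h := digitSum_eq_partialDigitSum_add hβ (digitsLE_eps1 (by linarith)) (N + 1)
  have hzero : shift (eps1 β) (N + 1) = fun _ => 0 := funext fun k => hN.2 _ (by omega)
  rw [hzero, digitSum_eps1 hβ] at h
  simpa [digitSum] using h.symm

lemma partialDigitSum_epsStar_of_isLastNonzero (hβ : 1 < β) {N : ℕ}
    (hN : IsLastNonzero (eps1 β) N) :
    partialDigitSum β (epsStar β) (N + 1) = 1 - 1 / β ^ (N + 1) := by
  have h := partialDigitSum_eps1_of_isLastNonzero hβ hN
  rw [partialDigitSum_succ] at h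
  rw [partialDigitSum_succ, partialDigitSum_congr (b := eps1 β) fun k hk => epsStar_of_lt hN hk,
    epsStar_self hN, Nat.cast_sub (Nat.one_le_iff_ne_zero.2 hN.1), Nat.cast_one, sub_div]
  linarith

lemma digitSum_epsStar_of_isLastNonzero (hβ : 1 < β) {N : ℕ} (hN : IsLastNonzero (eps1 β) N) :
    digitSum β (epsStar β) = 1 := by
  have h := digitSum_eq_partialDigitSum_add hβ (digitsLE_epsStar_of_isLastNonzero (by linarith) hN)
    (N + 1)
  have hshift : shift (epsStar β) (N + 1) = epsStar β :=
    funext fun k => by rw [shift_apply, add_comm]; exact epsStar_periodic hN k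
  rw [hshift, partialDigitSum_epsStar_of_isLastNonzero hβ hN] at h
  have hpow : 1 < β ^ (N + 1) := one_lt_pow₀ hβ N.succ_ne_zero
  have hprod : (digitSum β (epsStar β) - 1) * (β ^ (N + 1) - 1) = 0 := by
    field_simp at h
    linarith
  rcases mul_eq_zero.1 hprod with h1 | h1 <;> linarith

lemma digitsLE_epsStar (hβ : 0 ≤ β) : DigitsLE β (epsStar β) := by
  by_cases h : ∃ N, IsLastNonzero (eps1 β) N
  · exact digitsLE_epsStar_of_isLastNonzero hβ h.choose_spec
  · rw [epsStar_of_not_exists_isLastNonzero h]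
    exact digitsLE_eps1 hβ

lemma digitSum_epsStar (hβ : 1 < β) : digitSum β (epsStar β) = 1 := by
  by_cases h : ∃ N, IsLastNonzero (eps1 β) N
  · exact digitSum_epsStar_of_isLastNonzero hβ h.choose_spec
  · rw [epsStar_of_not_exists_isLastNonzero h]
    exact digitSum_eps1 hβ

/-- The tail is `T_βʳ 1` for some `r`; when `ε(β)` is finite, `r` can be taken below the period,
where `ε*(β)` still agrees with `ε(β)`. -/
lemma digitSum_shift_epsStar_mem_Ioc (hβ : 1 < β) (m : ℕ) :
    digitSum β (shift (epsStar β) m) ∈ Ioc 0 1 := by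
  have hone : (1 : ℝ) ∈ Icc 0 1 := ⟨zero_le_one, le_rfl⟩
  by_cases h : ∃ N, IsLastNonzero (eps1 β) N
  · obtain ⟨N, hN⟩ := h
    have hr : m % (N + 1) ≤ N := Nat.lt_succ_iff.1 (Nat.mod_lt _ N.succ_pos)
    rw [shift_epsStar_mod hN, digitSum_shift_eq_of_eqOn hβ
      (digitsLE_epsStar_of_isLastNonzero (by linarith) hN) (digitsLE_eps1 (by linarith))
      (fun k hk => epsStar_of_lt hN (by omega))
      (by rw [digitSum_epsStar_of_isLastNonzero hβ hN]; exact (digitSum_eps1 hβ).symm),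
      digitSum_shift_eps1 hβ]
    exact ⟨betaT_iterate_pos_of_betaDigit_ne_zero hone hr hN.1,
      (betaT_iterate_mem_Icc hone _).2⟩
  · rw [epsStar_of_not_exists_isLastNonzero h, digitSum_shift_eps1 hβ]
    refine ⟨(betaT_iterate_mem_Icc hone m).1.lt_of_ne' fun h0 => h ?_,
      (betaT_iterate_mem_Icc hone m).2⟩
    exact exists_isLastNonzero (eps1_zero_ne_zero hβ.le) fun k hk =>
      betaDigit_eq_zero_of_iterate_eq_zero h0 hk

lemma partialDigitSum_epsStar_lt_one (hβ : 1 < β) (n : ℕ) :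
    partialDigitSum β (epsStar β) n < 1 := by
  have h := digitSum_eq_partialDigitSum_add hβ (digitsLE_epsStar (by linarith)) n
  rw [digitSum_epsStar hβ] at h
  have : 0 < digitSum β (shift (epsStar β) n) / β ^ n :=
    div_pos (digitSum_shift_epsStar_mem_Ioc hβ n).1 (pow_pos (by linarith) n)
  linarith

end EpsStar

lemma lexLt_shift_betaDigit_epsStar (hβ : 1 < β) (hx : x ∈ Ico (0 : ℝ) 1) (i : ℕ) :
    lexLt (shift (betaDigit β x) i) (epsStar β) := by
  have hy := betaT_iterate_mem_Ico (β := β) hx i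
  have hval := digitSum_betaDigit hβ (Ico_subset_Icc_self hy)
  rw [shift_betaDigit]
  -- `lexLt` is definitionally the order of `Lex (ℕ → ℕ)`.
  rcases lt_trichotomy (toLex (betaDigit β ((betaT β)^[i] x))) (toLex (epsStar β))
    with hlt | heq | hgt
  · exact hlt
  · rw [toLex_inj.1 heq, digitSum_epsStar hβ] at hval
    linarith [hy.2]
  · have := digitSum_le_of_lexLt hβ (digitsLE_epsStar (by linarith))
      (digitsLE_betaDigit (by linarith) (Ico_subset_Icc_self hy)) hgt
      fun m => (digitSum_shift_epsStar_mem_Ioc hβ m).2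
    rw [digitSum_epsStar hβ, hval] at this
    linarith [hy.2]

lemma le_one_of_le_one_add_div_pow {g : ℕ → ℝ} (hβ : 1 < β) (hg : BddAbove (range g))
    (h : ∀ j, ∃ i, g j ≤ 1 + (g (j + (i + 1)) - 1) / β ^ (i + 1)) (j : ℕ) : g j ≤ 1 := by
  refine (le_ciSup hg j).trans (not_lt.1 fun hM => ?_)
  set M := ⨆ j, g j
  have hbound : ∀ j, g j ≤ 1 + (M - 1) / β := fun j => by
    obtain ⟨i, hi⟩ := h j
    calc g j ≤ 1 + (g (j + (i + 1)) - 1) / β ^ (i + 1) := hi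
      _ ≤ 1 + (M - 1) / β ^ (i + 1) := by gcongr; exact le_ciSup hg _
      _ ≤ 1 + (M - 1) / β := by
        have : 0 ≤ M - 1 := by linarith
        gcongr
        exact le_self_pow₀ hβ.le i.succ_ne_zero
  have hM' : M ≤ 1 + (M - 1) / β := ciSup_le hbound
  have : (M - 1) / β < M - 1 := div_lt_self (by linarith) hβ
  linarith

lemma digitsLE_of_forall_lexLt_epsStar (hβ : 0 ≤ β)
    (H : ∀ i, lexLt (shift a i) (epsStar β)) : DigitsLE β a := fun k =>
  (Nat.cast_le.2 (by simpa using head_le_of_lexLt (H k))).trans (digitsLE_epsStar hβ 0)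

lemma digitSum_shift_lt_one_of_forall_lexLt_epsStar (hβ : 1 < β)
    (H : ∀ i, lexLt (shift a i) (epsStar β)) (j : ℕ) : digitSum β (shift a j) < 1 := by
  have ha := digitsLE_of_forall_lexLt_epsStar (by linarith) H
  have hstep : ∀ j, ∃ i, digitSum β (shift a j) ≤ partialDigitSum β (epsStar β) (i + 1) +
      (digitSum β (shift a (j + (i + 1))) - 1) / β ^ (i + 1) := fun j => by
    simpa only [shift_shift] using exists_digitSum_le_of_lexLt hβ (ha.shift j) (H j)
  have hle : ∀ j, digitSum β (shift a j) ≤ 1 := by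
    refine le_one_of_le_one_add_div_pow hβ
      ⟨_, forall_mem_range.2 fun j => digitSum_le hβ (ha.shift j)⟩ fun j => ?_
    obtain ⟨i, hi⟩ := hstep j
    exact ⟨i, hi.trans (by linarith [partialDigitSum_epsStar_lt_one hβ (i + 1)])⟩
  obtain ⟨i, hi⟩ := hstep j
  have : (digitSum β (shift a (j + (i + 1))) - 1) / β ^ (i + 1) ≤ 0 :=
    div_nonpos_of_nonpos_of_nonneg (by linarith [hle (j + (i + 1))]) (pow_nonneg (by linarith) _)
  linarith [partialDigitSum_epsStar_lt_one hβ (i + 1)]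

lemma exists_betaDigit_eq_of_forall_lexLt_epsStar (hβ : 1 < β)
    (H : ∀ i, lexLt (shift a i) (epsStar β)) :
    ∃ x ∈ Ico (0 : ℝ) 1, ∀ k, a k = betaDigit β x k := by
  have ha := digitsLE_of_forall_lexLt_epsStar (by linarith) H
  have hmem : ∀ n, digitSum β (shift a n) ∈ Ico (0 : ℝ) 1 := fun n =>
    ⟨digitSum_nonneg (by linarith) _, digitSum_shift_lt_one_of_forall_lexLt_epsStar hβ H n⟩
  refine ⟨_, hmem 0, fun k => (betaDigit_eq_of_mul_eq hmem (fun n => ?_) k).symm⟩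
  rw [mul_digitSum hβ (ha.shift n), shift_shift, shift_apply, add_zero]

end BetaExpansion

open BetaExpansion in
theorem expansion_iff_lexLt_epsStar (β : ℝ) (hβ : 1 < β) (ξ : ℕ → ℕ) :
    (∃ x ∈ Set.Ico (0:ℝ) 1, ∀ k, ξ k = betaDigit β x k) ↔
      ∀ i : ℕ, lexLt (fun j => ξ (i + j)) (epsStar β) := by
  constructor
  · rintro ⟨x, hx, hξ⟩
    obtain rfl : ξ = betaDigit β x := funext hξ
    exact lexLt_shift_betaDigit_epsStar hβ hx
  · exact exists_betaDigit_eq_of_forall_lexLt_epsStar hβ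
end

section
/- For any 1 < β₁ < β₂, the β₁-expansion of 1 is lexicographically strictly smaller than the infinite β₂-expansion of 1: ε(β₁) ≺ ε*(β₂). -/
open MeasureTheory Set
open scoped Classical

/-! ### Auxiliary lemmas -/

section Aux

theorem aux_mod_succ_self {n N : ℕ} (h : n % (N+1) = N) : (n+1) % (N+1) = 0 := by
  have h2 := Nat.add_mod n 1 (N+1)
  rcases Nat.eq_zero_or_pos N with hN | hN
  · subst hN; simp [Nat.mod_one]
  · have h1 : 1 % (N+1) = 1 := Nat.mod_eq_of_lt (by omega)
    rw [h2, h1, h, Nat.mod_self]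

theorem aux_mod_succ_lt {n N : ℕ} (h : n % (N+1) < N) : (n+1) % (N+1) = n % (N+1) + 1 := by
  have h2 := Nat.add_mod n 1 (N+1)
  have h1 : 1 % (N+1) = 1 := Nat.mod_eq_of_lt (by omega)
  rw [h2, h1, Nat.mod_eq_of_lt (by omega)]

variable {β : ℝ} (hβ : 1 < β)

lemma t_nonneg (n : ℕ) : 0 ≤ (betaT β)^[n] 1 := by
  cases n with
  | zero => norm_num
  | succ n => rw [Function.iterate_succ_apply']; exact Int.fract_nonneg _

lemma t_le_one (n : ℕ) : (betaT β)^[n] 1 ≤ 1 := by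
  cases n with
  | zero => norm_num
  | succ n => rw [Function.iterate_succ_apply']; exact le_of_lt (Int.fract_lt_one _)

include hβ in
lemma digit_rec (n : ℕ) :
    β * (betaT β)^[n] 1 = (eps1 β n : ℝ) + (betaT β)^[n+1] 1 := by
  have h0 : 0 ≤ β * (betaT β)^[n] 1 :=
    mul_nonneg (by linarith) (t_nonneg n)
  have : (eps1 β n : ℝ) = ⌊β * (betaT β)^[n] 1⌋ := by
    have := Int.natCast_floor_eq_floor h0
    simp only [eps1, betaDigit]
    exact_mod_cast congrArg (fun z : ℤ => (z : ℝ)) this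
  rw [Function.iterate_succ_apply', betaT, this, Int.fract]
  ring

include hβ in
lemma PS_eps1 (n : ℕ) :
    ∑ k ∈ Finset.range n, (eps1 β k : ℝ) / β ^ (k+1) = 1 - (betaT β)^[n] 1 / β ^ n := by
  have hb0 : (0:ℝ) < β := by linarith
  induction n with
  | zero => simp
  | succ n ih =>
    have h := digit_rec hβ n
    have hpow : (β:ℝ) ^ n ≠ 0 := ne_of_gt (pow_pos hb0 n)
    have hpow1 : (β:ℝ) ^ (n+1) ≠ 0 := ne_of_gt (pow_pos hb0 (n+1))
    rw [Finset.sum_range_succ, ih,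
      show (betaT β)^[n+1] 1 = β * (betaT β)^[n] 1 - (eps1 β n : ℝ) from by linarith]
    field_simp
    ring

include hβ in
lemma eps1_summable : Summable (fun k => (eps1 β k : ℝ) / β ^ (k+1)) := by
  apply summable_of_sum_range_le (c := 1)
  · intro k; exact div_nonneg (Nat.cast_nonneg _) (le_of_lt (pow_pos (by linarith) _))
  · intro n
    rw [PS_eps1 hβ n]
    have h2 : 0 ≤ (betaT β)^[n] 1 / β ^ n :=
      div_nonneg (t_nonneg n) (le_of_lt (pow_pos (by linarith) _))
    linarith

include hβ in
lemma t_div_tendsto :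
    Filter.Tendsto (fun n => (betaT β)^[n] 1 / β ^ n) Filter.atTop (nhds 0) := by
  have hb0 : (0:ℝ) < β := by linarith
  have hlim : Filter.Tendsto (fun n : ℕ => ((1:ℝ)/β) ^ n) Filter.atTop (nhds 0) :=
    tendsto_pow_atTop_nhds_zero_of_lt_one (by positivity) (by rw [div_lt_one hb0]; linarith)
  refine tendsto_of_tendsto_of_tendsto_of_le_of_le tendsto_const_nhds hlim ?_ ?_
  · intro n
    exact div_nonneg (t_nonneg n) (le_of_lt (pow_pos hb0 _))
  · intro n
    show (betaT β)^[n] 1 / β ^ n ≤ ((1:ℝ)/β) ^ n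
    rw [one_div_pow]
    exact (div_le_div_iff_of_pos_right (pow_pos hb0 _)).mpr (t_le_one n)

include hβ in
lemma eps1_tsum : ∑' k, (eps1 β k : ℝ) / β ^ (k+1) = 1 := by
  have hs := eps1_summable hβ
  refine HasSum.tsum_eq ?_
  rw [hs.hasSum_iff_tendsto_nat]
  have h := (t_div_tendsto hβ).const_sub 1
  simp only [sub_zero] at h
  convert h using 2 with n
  exact PS_eps1 hβ n

lemma lex_of_sums {a b : ℕ → ℕ} {β : ℝ} (hβ : 1 < β)
    (hsa : Summable (fun k => (a k : ℝ) / β ^ (k+1)))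
    (ha : ∑' k, (a k : ℝ) / β ^ (k+1) < 1)
    (hb : ∀ n, 1 - (1/β) ^ n ≤ ∑ k ∈ Finset.range n, (b k : ℝ) / β ^ (k+1)) :
    lexLt a b := by
  classical
  have hb0 : (0:ℝ) < β := by linarith
  have hnn : ∀ k, 0 ≤ (a k : ℝ) / β ^ (k+1) := fun k =>
    div_nonneg (Nat.cast_nonneg _) (le_of_lt (pow_pos hb0 _))
  have hps : ∀ n, ∑ k ∈ Finset.range n, (a k : ℝ) / β ^ (k+1) ≤ ∑' k, (a k : ℝ) / β ^ (k+1) :=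
    fun n => Summable.sum_le_tsum (Finset.range n) (fun i _ => hnn i) hsa
  by_contra hcon
  by_cases heq : ∀ k, a k = b k
  · obtain ⟨n, hn⟩ : ∃ n : ℕ, ((1:ℝ)/β) ^ n < 1 - ∑' k, (a k : ℝ) / β ^ (k+1) :=
      exists_pow_lt_of_lt_one (by linarith) (by rw [div_lt_one hb0]; linarith)
    have h1 := hb n
    have h2 : ∑ k ∈ Finset.range n, (b k : ℝ) / β ^ (k+1)
        = ∑ k ∈ Finset.range n, (a k : ℝ) / β ^ (k+1) := by
      refine Finset.sum_congr rfl fun i _ => by rw [heq i]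
    rw [h2] at h1
    have := hps n
    linarith
  · push_neg at heq
    set i := Nat.find heq with hi
    have hne : a i ≠ b i := Nat.find_spec heq
    have hlt : ∀ j, j < i → a j = b j := fun j hj => not_not.mp (Nat.find_min heq hj)
    have hai : b i + 1 ≤ a i := by
      rcases lt_or_gt_of_ne hne with h | h
      · exact absurd ⟨i, hlt, h⟩ hcon
      · omega
    have h3 : ((b i : ℝ) + 1) ≤ (a i : ℝ) := by exact_mod_cast hai
    have h4 : ((b i : ℝ) + 1) / β ^ (i+1) ≤ (a i : ℝ) / β ^ (i+1) :=
      (div_le_div_iff_of_pos_right (pow_pos hb0 _)).mpr h3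
    have h2 : ∑ k ∈ Finset.range i, (b k : ℝ) / β ^ (k+1)
        = ∑ k ∈ Finset.range i, (a k : ℝ) / β ^ (k+1) :=
      Finset.sum_congr rfl fun j hj => by rw [hlt j (Finset.mem_range.mp hj)]
    have key : ∑ k ∈ Finset.range (i+1), (b k : ℝ) / β ^ (k+1) + 1/β^(i+1)
        ≤ ∑ k ∈ Finset.range (i+1), (a k : ℝ) / β ^ (k+1) := by
      rw [Finset.sum_range_succ, Finset.sum_range_succ, h2]
      have : ((b i : ℝ) + 1) / β ^ (i+1) = (b i : ℝ) / β ^ (i+1) + 1/β^(i+1) := by ring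
      linarith
    have hpow : ((1:ℝ)/β) ^ (i+1) = 1/β^(i+1) := one_div_pow β (i+1)
    have := hb (i+1)
    have := hps (i+1)
    linarith

include hβ in
lemma epsStar_PS (n : ℕ) :
    1 - (1/β) ^ n ≤ ∑ k ∈ Finset.range n, (epsStar β k : ℝ) / β ^ (k+1) := by
  have hb0 : (0:ℝ) < β := by linarith
  have tb : ∀ (m j : ℕ), (betaT β)^[m] 1 / β ^ j ≤ ((1:ℝ)/β) ^ j := fun m j => by
    rw [one_div_pow]
    exact (div_le_div_iff_of_pos_right (pow_pos hb0 _)).mpr (t_le_one m)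
  rw [epsStar]
  by_cases h : ∃ N, eps1 β N ≠ 0 ∧ ∀ k, N < k → eps1 β k = 0
  · rw [dif_pos h]
    set N := h.choose with hN
    obtain ⟨hN0, hNz⟩ := h.choose_spec
    rw [← hN] at hN0 hNz
    -- T^[N+1] 1 = 0
    have hiter : ∀ m, (betaT β)^[N+1+m] 1 = β ^ m * (betaT β)^[N+1] 1 := by
      intro m
      induction m with
      | zero => simp
      | succ m ih =>
        have hz : ⌊β * (betaT β)^[N+1+m] 1⌋₊ = 0 := hNz (N+1+m) (by omega)
        have h0 : 0 ≤ β * (betaT β)^[N+1+m] 1 := mul_nonneg (by linarith) (t_nonneg _)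
        have hlt1 : β * (betaT β)^[N+1+m] 1 < 1 := by
          have := Nat.floor_eq_zero.mp hz
          linarith
        have hstep : (betaT β)^[N+1+(m+1)] 1 = β * (betaT β)^[N+1+m] 1 := by
          rw [show N+1+(m+1) = (N+1+m)+1 from rfl, Function.iterate_succ_apply', betaT,
            Int.fract_eq_self.mpr ⟨h0, hlt1⟩]
        rw [hstep, ih]; ring
    have tN1 : (betaT β)^[N+1] 1 = 0 := by
      by_contra hne
      have hpos : 0 < (betaT β)^[N+1] 1 := lt_of_le_of_ne (t_nonneg _) (Ne.symm hne)
      obtain ⟨m, hm⟩ := pow_unbounded_of_one_lt (1 / (betaT β)^[N+1] 1) hβ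
      have h1 := t_le_one (β := β) (N+1+m)
      rw [hiter m] at h1
      have : 1 < β ^ m * (betaT β)^[N+1] 1 := (div_lt_iff₀ hpos).mp hm
      linarith
    have epsN1 : 1 ≤ eps1 β N := Nat.pos_of_ne_zero hN0
    have hcast : ((eps1 β N - 1 : ℕ) : ℝ) = (eps1 β N : ℝ) - 1 := by
      push_cast [Nat.cast_sub epsN1]; ring
    -- partial sum formula
    have main : ∀ n, ∑ k ∈ Finset.range n,
        ((if k % (N+1) = N then eps1 β N - 1 else eps1 β (k % (N+1)) : ℕ) : ℝ) / β ^ (k+1)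
        = 1 - (betaT β)^[n % (N+1)] 1 / β ^ n := by
      intro n
      induction n with
      | zero => simp
      | succ n ih =>
        have hrec : (betaT β)^[(n+1) % (N+1)] 1
            = β * (betaT β)^[n % (N+1)] 1
              - ((if n % (N+1) = N then eps1 β N - 1 else eps1 β (n % (N+1)) : ℕ) : ℝ) := by
          by_cases hc : n % (N+1) = N
          · rw [if_pos hc, hc, aux_mod_succ_self hc, hcast]
            have hd := digit_rec hβ N
            rw [tN1] at hd
            simp only [Function.iterate_zero_apply]
            linarith
          · have hlt' : n % (N+1) < N := by
              have := Nat.mod_lt n (y := N+1) (by omega)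
              omega
            rw [if_neg hc, aux_mod_succ_lt hlt']
            have hd := digit_rec hβ (n % (N+1))
            linarith
        have hpow : (β:ℝ) ^ n ≠ 0 := ne_of_gt (pow_pos hb0 n)
        have hpow1 : (β:ℝ) ^ (n+1) ≠ 0 := ne_of_gt (pow_pos hb0 (n+1))
        rw [Finset.sum_range_succ, ih, hrec]
        generalize ((if n % (N+1) = N then eps1 β N - 1 else eps1 β (n % (N+1)) : ℕ) : ℝ) = d
        field_simp
        ring
    rw [main n]
    have := tb (n % (N+1)) n
    linarith
  · rw [dif_neg h]
    rw [PS_eps1 hβ n]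
    have := tb n n
    linarith

end Aux

theorem eps1_lt_epsStar (β₁ β₂ : ℝ) (h1 : 1 < β₁) (h2 : β₁ < β₂) :
    lexLt (eps1 β₁) (epsStar β₂) := by
  have hβ₂ : 1 < β₂ := h1.trans h2
  have hb10 : (0:ℝ) < β₁ := by linarith
  have hb20 : (0:ℝ) < β₂ := by linarith
  have hs1 : Summable (fun k => (eps1 β₁ k : ℝ) / β₁ ^ (k+1)) := eps1_summable h1
  have hle : ∀ k, (eps1 β₁ k : ℝ) / β₂ ^ (k+1) ≤ (eps1 β₁ k : ℝ) / β₁ ^ (k+1) := fun k =>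
    div_le_div_of_nonneg_left (Nat.cast_nonneg _) (pow_pos hb10 _)
      (pow_le_pow_left₀ (le_of_lt hb10) (le_of_lt h2) _)
  have hnn : ∀ k, 0 ≤ (eps1 β₁ k : ℝ) / β₂ ^ (k+1) := fun k =>
    div_nonneg (Nat.cast_nonneg _) (le_of_lt (pow_pos hb20 _))
  have hsa : Summable (fun k => (eps1 β₁ k : ℝ) / β₂ ^ (k+1)) :=
    Summable.of_nonneg_of_le hnn hle hs1
  have heps0 : 1 ≤ eps1 β₁ 0 := by
    have : (1:ℕ) ≤ ⌊β₁⌋₊ := Nat.le_floor (by exact_mod_cast le_of_lt h1)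
    simpa [eps1, betaDigit] using this
  have h0 : (eps1 β₁ 0 : ℝ) / β₂ ^ (0+1) < (eps1 β₁ 0 : ℝ) / β₁ ^ (0+1) := by
    have h01 : (0:ℝ) < eps1 β₁ 0 := by exact_mod_cast heps0
    exact div_lt_div_of_pos_left h01 (pow_pos hb10 _)
      (pow_lt_pow_left₀ h2 (le_of_lt hb10) (by norm_num))
  have ha : ∑' k, (eps1 β₁ k : ℝ) / β₂ ^ (k+1) < 1 := by
    calc ∑' k, (eps1 β₁ k : ℝ) / β₂ ^ (k+1)
        < ∑' k, (eps1 β₁ k : ℝ) / β₁ ^ (k+1) := Summable.tsum_lt_tsum_of_nonneg hnn hle h0 hs1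
      _ = 1 := eps1_tsum h1
  exact lex_of_sums hβ₂ hsa ha (epsStar_PS hβ₂)
end

section
/- Fix β > 1. A word w ∈ Σ_n(β) gives a full cylinder (i.e., the cylinder I(w) = {x ∈ [0,1) : the β-expansion of x starts with w} has length exactly β^{-n}) if and only if for every m ≥ 1 and every admissible word v ∈ Σ_m(β), the concatenation wv is admissible, i.e., wv ∈ Σ_{n+m}(β). -/
open MeasureTheory Set
open scoped Classical

/-!
On the cylinder of an admissible word `w` of length `n`, `T_β^n` agrees with an affine map
`x ↦ β^n (x - L)`, and the cylinder is an interval `[L, R)` with `R ≤ L + β^{-n}`, so that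
`T_β^n` maps it onto `[0, β^n (R - L))`. A word `v` can follow `w` iff this image meets the
cylinder of `v`. The image is all of `[0,1)` exactly when the cylinder is full; conversely,
if every admissible `v` can follow `w`, taking for `v` a long prefix of the expansion of a point
close to `1` shows that the image reaches arbitrarily close to `1`.
-/

theorem Int.floor_eq_floor_of_le_of_sub_le_fract {α : Type*} [Ring α] [LinearOrder α]
    [IsStrictOrderedRing α] [FloorRing α] {a b : α} (hba : b ≤ a) (h : a - b ≤ Int.fract a) :
    ⌊b⌋ = ⌊a⌋ := by
  rw [Int.fract, sub_le_sub_iff_left] at h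
  exact Int.floor_eq_iff.2 ⟨h, hba.trans_lt (Int.lt_floor_add_one a)⟩

section BetaTransformation

variable {β : ℝ}

theorem mapsTo_betaT (β : ℝ) : MapsTo (betaT β) (Ico 0 1) (Ico 0 1) :=
  fun _ _ => ⟨Int.fract_nonneg _, Int.fract_lt_one _⟩

theorem betaDigit_add (β x : ℝ) (k n : ℕ) :
    betaDigit β x (n + k) = betaDigit β ((betaT β)^[n] x) k := by
  rw [betaDigit, betaDigit, add_comm, Function.iterate_add_apply]

theorem betaT_eq_mul_sub_betaDigit (hβ : 0 ≤ β) {x : ℝ} (hx : 0 ≤ x) :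
    betaT β x = β * x - betaDigit β x 0 := by
  rw [betaT, betaDigit, Function.iterate_zero_apply,
    natCast_floor_eq_intCast_floor (mul_nonneg hβ hx), Int.fract]

theorem iterate_betaT_le (hβ : 0 ≤ β) (k : ℕ) {x : ℝ} (hx : 0 ≤ x) :
    (betaT β)^[k] x ≤ β ^ k * x := by
  induction k generalizing x with
  | zero => simp
  | succ k ih =>
    have hT : betaT β x ≤ β * x := by
      rw [betaT_eq_mul_sub_betaDigit hβ hx]
      linarith [(betaDigit β x 0).cast_nonneg (α := ℝ)]
    calc (betaT β)^[k + 1] x = (betaT β)^[k] (betaT β x) := rfl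
      _ ≤ β ^ k * betaT β x := ih (Int.fract_nonneg _)
      _ ≤ β ^ k * (β * x) := by gcongr
      _ = β ^ (k + 1) * x := by ring

theorem iterate_betaT_sub_iterate_betaT (hβ : 0 ≤ β) (k : ℕ) {x y : ℝ} (hx : 0 ≤ x) (hy : 0 ≤ y)
    (hd : ∀ j < k, betaDigit β x j = betaDigit β y j) :
    (betaT β)^[k] x - (betaT β)^[k] y = β ^ k * (x - y) := by
  induction k generalizing x y with
  | zero => simp
  | succ k ih =>
    have h0 : betaT β x - betaT β y = β * (x - y) := by
      rw [betaT_eq_mul_sub_betaDigit hβ hx, betaT_eq_mul_sub_betaDigit hβ hy, hd 0 k.succ_pos]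
      ring
    calc (betaT β)^[k + 1] x - (betaT β)^[k + 1] y
        = β ^ k * (betaT β x - betaT β y) :=
          ih (Int.fract_nonneg _) (Int.fract_nonneg _) fun j hj => hd (j + 1) (by omega)
      _ = β ^ (k + 1) * (x - y) := by rw [h0]; ring

theorem betaDigit_eq_of_le (hβ : 0 < β) (k : ℕ) {x y : ℝ} (hx : 0 ≤ x) (hyx : y ≤ x)
    (h : β ^ k * (x - y) ≤ (betaT β)^[k] x) : ∀ j < k, betaDigit β y j = betaDigit β x j := by
  induction k generalizing x y with
  | zero => simp
  | succ k ih =>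
    have hTx : 0 ≤ betaT β x := Int.fract_nonneg _
    have h1 : β * (x - y) ≤ betaT β x := by
      refine le_of_mul_le_mul_left ?_ (pow_pos hβ k)
      calc β ^ k * (β * (x - y)) = β ^ (k + 1) * (x - y) := by ring
        _ ≤ (betaT β)^[k] (betaT β x) := h
        _ ≤ β ^ k * betaT β x := iterate_betaT_le hβ.le k hTx
    have hfloor : ⌊β * y⌋ = ⌊β * x⌋ :=
      Int.floor_eq_floor_of_le_of_sub_le_fract (by gcongr) (by rw [← mul_sub]; exact h1)
    have hT : betaT β y = betaT β x - β * (x - y) := by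
      rw [betaT, betaT, Int.fract, Int.fract, hfloor]
      ring
    have htail : ∀ j < k, betaDigit β (betaT β y) j = betaDigit β (betaT β x) j := by
      refine ih hTx (by rw [hT]; linarith [mul_nonneg hβ.le (sub_nonneg.2 hyx)]) ?_
      calc β ^ k * (betaT β x - betaT β y) = β ^ (k + 1) * (x - y) := by rw [hT]; ring
        _ ≤ _ := h
    rintro (_ | j) hj
    · simp only [betaDigit, Function.iterate_zero_apply, ← Int.floor_toNat, hfloor]
    · exact htail j (by omega)

end BetaTransformation

section Cylinders

variable {β : ℝ} {n : ℕ} {w : Fin n → ℕ}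

theorem mem_admWords_iff_nonempty_cyl : w ∈ admWords β n ↔ (cyl β w).Nonempty :=
  ⟨fun ⟨x, hx, h⟩ => ⟨x, hx, fun i => (h i).symm⟩, fun ⟨x, hx, h⟩ => ⟨x, hx, fun i => (h i).symm⟩⟩

theorem cyl_append {m : ℕ} (v : Fin m → ℕ) :
    cyl β (Fin.append w v) = cyl β w ∩ (betaT β)^[n] ⁻¹' cyl β v := by
  ext x
  simp only [cyl, mem_inter_iff, mem_preimage, mem_ofPred_eq, Fin.forall_fin_add,
    Fin.append_left, Fin.append_right, Fin.val_castAdd, Fin.val_natAdd, betaDigit_add]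
  constructor
  · rintro ⟨hx, hw, hv⟩
    exact ⟨⟨hx, hw⟩, (mapsTo_betaT β).iterate n hx, hv⟩
  · rintro ⟨⟨hx, hw⟩, -, hv⟩
    exact ⟨hx, hw, hv⟩

theorem pow_mul_sub_lt_one_of_mem_cyl (hβ : 0 ≤ β) {x y : ℝ} (hx : x ∈ cyl β w)
    (hy : y ∈ cyl β w) : β ^ n * (x - y) < 1 := by
  rw [← iterate_betaT_sub_iterate_betaT hβ n hx.1.1 hy.1.1
    fun j hj => (hx.2 ⟨j, hj⟩).trans (hy.2 ⟨j, hj⟩).symm]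
  linarith [((mapsTo_betaT β).iterate n hx.1).2, ((mapsTo_betaT β).iterate n hy.1).1]

theorem exists_affine_on_cyl (hβ : 0 < β) (hne : (cyl β w).Nonempty) :
    ∃ L : ℝ, cyl β w ⊆ Ico L (L + 1 / β ^ n) ∧
      (∀ x ∈ cyl β w, (betaT β)^[n] x = β ^ n * (x - L)) ∧ ∀ x ∈ cyl β w, Icc L x ⊆ cyl β w := by
  obtain ⟨x₀, hx₀⟩ := hne
  have hpow : 0 < β ^ n := pow_pos hβ n
  refine ⟨x₀ - (betaT β)^[n] x₀ / β ^ n, ?_⟩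
  have hT : ∀ x ∈ cyl β w, (betaT β)^[n] x = β ^ n * (x - (x₀ - (betaT β)^[n] x₀ / β ^ n)) := by
    intro x hx
    have := iterate_betaT_sub_iterate_betaT hβ.le n hx.1.1 hx₀.1.1
      fun j hj => (hx.2 ⟨j, hj⟩).trans (hx₀.2 ⟨j, hj⟩).symm
    field_simp
    linarith
  refine ⟨fun x hx => ?_, hT, fun x hx y hy => ?_⟩
  · obtain ⟨h0, h1⟩ := (mapsTo_betaT β).iterate n hx.1
    rw [hT x hx] at h0 h1
    constructor
    · exact sub_nonneg.1 (nonneg_of_mul_nonneg_right h0 hpow)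
    · rw [← lt_div_iff₀' hpow] at h1
      linarith
  · have hyx : β ^ n * (x - y) ≤ (betaT β)^[n] x := by
      rw [hT x hx]
      exact mul_le_mul_of_nonneg_left (by linarith [hy.1]) hpow.le
    have hy0 : 0 ≤ y := by
      refine nonneg_of_mul_nonneg_right ?_ hpow
      linarith [iterate_betaT_le hβ.le n hx.1.1]
    refine ⟨⟨hy0, hy.2.trans_lt hx.1.2⟩, fun i => ?_⟩
    rw [betaDigit_eq_of_le hβ n hx.1.1 hy.2 hyx i i.2]
    exact hx.2 i

end Cylinders

theorem volume_eq_ofReal_iff_eq_Ico {s : Set ℝ} {a c : ℝ} (hs : s ⊆ Ico a (a + c))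
    (hlow : ∀ x ∈ s, Icc a x ⊆ s) : volume s = ENNReal.ofReal c ↔ s = Ico a (a + c) := by
  refine ⟨fun hvol => hs.antisymm fun t ht => ?_, fun h => by rw [h, Real.volume_Ico]; ring_nf⟩
  by_contra hts
  have hst : s ⊆ Ico a t := fun x hx =>
    ⟨(hs hx).1, lt_of_not_ge fun htx => hts (hlow x hx ⟨ht.1, htx⟩)⟩
  have : volume s < ENNReal.ofReal c :=
    calc volume s ≤ volume (Ico a t) := measure_mono hst
      _ = ENNReal.ofReal (t - a) := Real.volume_Ico
      _ < ENNReal.ofReal c := (ENNReal.ofReal_lt_ofReal_iff (by linarith [ht.1, ht.2])).2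
          (by linarith [ht.2])
  exact this.ne hvol

section Concatenation

variable {β : ℝ} {n : ℕ} {w : Fin n → ℕ} {L : ℝ}

theorem append_mem_admWords_of_cyl_eq_Ico (hβ : 0 < β)
    (hT : ∀ x ∈ cyl β w, (betaT β)^[n] x = β ^ n * (x - L))
    (hfull : cyl β w = Ico L (L + 1 / β ^ n)) {m : ℕ} {v : Fin m → ℕ} (hv : v ∈ admWords β m) :
    Fin.append w v ∈ admWords β (n + m) := by
  obtain ⟨x, hx⟩ := mem_admWords_iff_nonempty_cyl.1 hv
  have hpow : 0 < β ^ n := pow_pos hβ n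
  have hy : L + x / β ^ n ∈ cyl β w := by
    rw [hfull]
    exact ⟨by linarith [div_nonneg hx.1.1 hpow.le], by
      linarith [div_lt_div_of_pos_right hx.1.2 hpow]⟩
  rw [mem_admWords_iff_nonempty_cyl, cyl_append]
  refine ⟨_, hy, ?_⟩
  rwa [mem_preimage, hT _ hy, add_sub_cancel_left, mul_div_cancel₀ _ hpow.ne']

theorem cyl_eq_Ico_of_forall_append_mem (hβ : 1 < β) (hsub : cyl β w ⊆ Ico L (L + 1 / β ^ n))
    (hT : ∀ x ∈ cyl β w, (betaT β)^[n] x = β ^ n * (x - L))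
    (hlow : ∀ x ∈ cyl β w, Icc L x ⊆ cyl β w)
    (hcat : ∀ m : ℕ, 1 ≤ m → ∀ v ∈ admWords β m, Fin.append w v ∈ admWords β (n + m)) :
    cyl β w = Ico L (L + 1 / β ^ n) := by
  refine hsub.antisymm fun t ht => ?_
  have hβ0 : 0 < β := zero_lt_one.trans hβ
  have hpow : 0 < β ^ n := pow_pos hβ0 n
  set δ := 1 - β ^ n * (t - L)
  have hδ0 : 0 < δ := by
    have := ht.2
    rw [← sub_lt_iff_lt_add', lt_div_iff₀ hpow] at this
    linarith
  obtain ⟨m, hm1, hm⟩ := ((Filter.eventually_ge_atTop 1).and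
    ((tendsto_pow_atTop_atTop_of_one_lt hβ).eventually_gt_atTop (2 / δ))).exists
  have hq : 0 < β ^ m := pow_pos hβ0 m
  rw [div_lt_iff₀ hδ0] at hm
  -- `T_β^n` of some point of `cyl β w` lies in the cylinder of the first `m` digits of
  -- `x = 1 - β^{-m}`, hence within `β^{-m}` of `x`.
  set x := 1 - 1 / β ^ m
  have hx : x ∈ Ico (0 : ℝ) 1 :=
    ⟨by rw [sub_nonneg, div_le_one hq]; exact one_le_pow₀ hβ.le, by linarith [one_div_pos.2 hq]⟩
  obtain ⟨y, hy, hyv⟩ := (mem_admWords_iff_nonempty_cyl.1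
    (hcat m hm1 (fun i => betaDigit β x i) ⟨x, hx, fun _ => rfl⟩)).imp fun _ h => by
      rwa [cyl_append] at h
  have hclose := pow_mul_sub_lt_one_of_mem_cyl hβ0.le (⟨hx, fun _ => rfl⟩ : x ∈ cyl β _) hyv
  rw [hT y hy] at hclose
  have hx' : β ^ m * x = β ^ m - 1 := by rw [mul_sub, mul_one, mul_one_div_cancel hq.ne']
  have hscaled : β ^ m * (β ^ n * (t - L)) < β ^ m * (β ^ n * (y - L)) := by
    rw [mul_sub, hx'] at hclose
    rw [show β ^ n * (t - L) = 1 - δ by ring, mul_one_sub]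
    linarith
  have hyt := lt_of_mul_lt_mul_left (lt_of_mul_lt_mul_left hscaled hq.le) hpow.le
  exact hlow y hy ⟨ht.1, by linarith⟩

end Concatenation

theorem full_iff_concat_admissible (β : ℝ) (hβ : 1 < β) (n : ℕ) (w : Fin n → ℕ)
    (hw : w ∈ admWords β n) :
    volume (cyl β w) = ENNReal.ofReal (1 / β ^ n) ↔
      ∀ m : ℕ, 1 ≤ m → ∀ v ∈ admWords β m, Fin.append w v ∈ admWords β (n + m) := by
  have hβ0 : 0 < β := zero_lt_one.trans hβ
  obtain ⟨L, hsub, hT, hlow⟩ := exists_affine_on_cyl hβ0 (mem_admWords_iff_nonempty_cyl.1 hw)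
  rw [volume_eq_ofReal_iff_eq_Ico hsub hlow]
  exact ⟨fun hfull _ _ _ hv => append_mem_admWords_of_cyl_eq_Ico hβ0 hT hfull hv,
    cyl_eq_Ico_of_forall_append_mem hβ hsub hT hlow⟩
end

section
/- Fix β > 1. If w ∈ Ξ_n(β) and v ∈ Ξ_m(β) are words giving full cylinders, then their concatenation wv is in Ξ_{n+m}(β), i.e., the concatenation of two full words is full. -/
open MeasureTheory Set
open scoped Classical

/-! ### Auxiliary lemmas -/

lemma betaT_iter_mem {β x : ℝ} (hx : x ∈ Set.Ico (0:ℝ) 1) (k : ℕ) :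
    (betaT β)^[k] x ∈ Set.Ico (0:ℝ) 1 := by
  induction k with
  | zero => simpa using hx
  | succ k ih =>
    rw [Function.iterate_succ_apply']
    exact ⟨Int.fract_nonneg _, Int.fract_lt_one _⟩

lemma betaDigit_shift (β x : ℝ) (n j : ℕ) :
    betaDigit β x (n + j) = betaDigit β ((betaT β)^[n] x) j := by
  unfold betaDigit
  rw [add_comm, Function.iterate_add_apply]

/-- The affine description of `T^n` is determined by the digits. -/
lemma iter_affine (β : ℝ) (hβ : 0 < β) :
    ∀ n (x y : ℝ), 0 ≤ x → 0 ≤ y →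
      (∀ i, i < n → betaDigit β x i = betaDigit β y i) →
      β ^ n * x - (betaT β)^[n] x = β ^ n * y - (betaT β)^[n] y := by
  intro n
  induction n with
  | zero => intro x y _ _ _; simp
  | succ n ih =>
    intro x y hx hy h
    have hux : 0 ≤ (betaT β)^[n] x := by
      cases n with
      | zero => simpa using hx
      | succ n => rw [Function.iterate_succ_apply']; exact Int.fract_nonneg _
    have huy : 0 ≤ (betaT β)^[n] y := by
      cases n with
      | zero => simpa using hy
      | succ n => rw [Function.iterate_succ_apply']; exact Int.fract_nonneg _
    have hdig : betaDigit β x n = betaDigit β y n := h n (Nat.lt_succ_self n)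
    have hfloor : (⌊β * (betaT β)^[n] x⌋ : ℝ) = (⌊β * (betaT β)^[n] y⌋ : ℝ) := by
      have h1 : (⌊β * (betaT β)^[n] x⌋₊ : ℤ) = ⌊β * (betaT β)^[n] x⌋ :=
        Int.natCast_floor_eq_floor (by positivity)
      have h2 : (⌊β * (betaT β)^[n] y⌋₊ : ℤ) = ⌊β * (betaT β)^[n] y⌋ :=
        Int.natCast_floor_eq_floor (by positivity)
      rw [← h1, ← h2]
      exact_mod_cast congrArg (fun m : ℕ => (m : ℝ)) hdig
    have ihxy := ih x y hx hy (fun i hi => h i (hi.trans (Nat.lt_succ_self n)))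
    rw [Function.iterate_succ_apply', Function.iterate_succ_apply']
    have hfr : ∀ z : ℝ, betaT β z = β * z - ⌊β * z⌋ := fun z => (Int.self_sub_floor _).symm
    rw [hfr, hfr, pow_succ]
    have : β ^ (n+1) * x = β * (β ^ n * x) := by ring
    nlinarith [ihxy, hfloor]

lemma measurable_betaDigit (β : ℝ) (k : ℕ) : Measurable (fun x => betaDigit β x k) := by
  have hT : Measurable (betaT β) := measurable_fract.comp (measurable_id.const_mul β)
  exact Nat.measurable_floor.comp ((hT.iterate k).const_mul β)

lemma measurableSet_cyl (β : ℝ) {n : ℕ} (w : Fin n → ℕ) : MeasurableSet (cyl β w) := by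
  have : cyl β w = Set.Ico (0:ℝ) 1 ∩ ⋂ i : Fin n, (fun x => betaDigit β x i) ⁻¹' {w i} := by
    ext x; simp [cyl, Set.mem_iInter]
  rw [this]
  exact measurableSet_Ico.inter
    (MeasurableSet.iInter fun i => (measurable_betaDigit β i) (measurableSet_singleton _))

theorem append_full_of_full (β : ℝ) (hβ : 1 < β) (n m : ℕ)
    (w : Fin n → ℕ) (v : Fin m → ℕ)
    (hw : w ∈ fullWords β n) (hv : v ∈ fullWords β m) :
    Fin.append w v ∈ fullWords β (n + m) := by
  have hβ0 : (0:ℝ) < β := lt_trans one_pos hβ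
  have hbn : (0:ℝ) < β ^ n := pow_pos hβ0 n
  -- pick a base point of cyl β w
  obtain ⟨x₀, hx₀, hx₀d⟩ := hw.1
  have hx₀c : x₀ ∈ cyl β w := ⟨hx₀, fun i => (hx₀d i).symm⟩
  set c : ℝ := β ^ n * x₀ - (betaT β)^[n] x₀ with hc
  set f : ℝ → ℝ := fun x => β ^ n * x - c with hf
  -- T^n agrees with f on cyl w
  have hTf : ∀ x ∈ cyl β w, (betaT β)^[n] x = f x := by
    intro x hx
    have := iter_affine β hβ0 n x x₀ hx.1.1 hx₀.1
      (fun i hi => by rw [hx.2 ⟨i, hi⟩, hx₀d ⟨i, hi⟩])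
    simp only [hf]
    linarith
  -- cylinder of the concatenation
  have hsplit : cyl β (Fin.append w v) = cyl β w ∩ f ⁻¹' (cyl β v) := by
    ext x
    constructor
    · rintro ⟨hx1, hx2⟩
      have hxw : x ∈ cyl β w := by
        refine ⟨hx1, fun i => ?_⟩
        have := hx2 (Fin.castAdd m i)
        rwa [Fin.append_left] at this
      refine ⟨hxw, ?_⟩
      have hfx : f x = (betaT β)^[n] x := (hTf x hxw).symm
      simp only [Set.mem_preimage, hfx]
      refine ⟨betaT_iter_mem hx1 n, fun j => ?_⟩
      have := hx2 (Fin.natAdd n j)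
      rw [Fin.append_right] at this
      rw [← this, ← betaDigit_shift]
      rfl
    · rintro ⟨hxw, hxv⟩
      have hfx : f x = (betaT β)^[n] x := (hTf x hxw).symm
      rw [Set.mem_preimage, hfx] at hxv
      refine ⟨hxw.1, fun i => ?_⟩
      refine Fin.addCases (fun i => ?_) (fun j => ?_) i
      · rw [Fin.append_left]
        exact hxw.2 i
      · rw [Fin.append_right]
        have h1 : betaDigit β x ((Fin.natAdd n j : Fin (n+m)) : ℕ) =
            betaDigit β ((betaT β)^[n] x) j := by
          have : ((Fin.natAdd n j : Fin (n+m)) : ℕ) = n + (j : ℕ) := rfl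
          rw [this, betaDigit_shift]
        rw [h1]
        exact hxv.2 j
  -- volume of preimages under f
  have hfp : ∀ s : Set ℝ, f ⁻¹' s = (fun x => β ^ n * x) ⁻¹' ((fun y => -c + y) ⁻¹' s) := by
    intro s; ext x; simp [hf, Set.mem_preimage, sub_eq_neg_add, add_comm]
  have hvolpre : ∀ s : Set ℝ, volume (f ⁻¹' s) = ENNReal.ofReal (1 / β ^ n) * volume s := by
    intro s
    rw [hfp s, Real.volume_preimage_mul_left (ne_of_gt hbn),
      measure_preimage_add volume (-c) s]
    congr 1
    rw [abs_of_pos (inv_pos.2 hbn), one_div]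
  -- cyl w is contained in f ⁻¹' [0,1) with full measure
  have hsub : cyl β w ⊆ f ⁻¹' (Set.Ico (0:ℝ) 1) := by
    intro x hx
    rw [Set.mem_preimage, ← hTf x hx]
    exact betaT_iter_mem hx.1 n
  have hIvol : volume (f ⁻¹' (Set.Ico (0:ℝ) 1)) = ENNReal.ofReal (1 / β ^ n) := by
    rw [hvolpre, Real.volume_Ico]
    simp
  have hwfin : volume (cyl β w) ≠ ⊤ := by
    rw [hw.2]; exact ENNReal.ofReal_ne_top
  have hnull : volume (f ⁻¹' (Set.Ico (0:ℝ) 1) \ cyl β w) = 0 := by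
    rw [measure_diff hsub (measurableSet_cyl β w).nullMeasurableSet hwfin, hIvol, hw.2,
      tsub_self]
  -- volume of the concatenated cylinder
  have hvsub : cyl β v ⊆ Set.Ico (0:ℝ) 1 := fun x hx => hx.1
  have hvol : volume (cyl β (Fin.append w v)) = volume (f ⁻¹' (cyl β v)) := by
    apply le_antisymm
    · rw [hsplit]; exact measure_mono Set.inter_subset_right
    · have hcover : f ⁻¹' (cyl β v) ⊆
          cyl β (Fin.append w v) ∪ (f ⁻¹' (Set.Ico (0:ℝ) 1) \ cyl β w) := by
        intro x hx
        by_cases hxw : x ∈ cyl β w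
        · left; rw [hsplit]; exact ⟨hxw, hx⟩
        · right
          exact ⟨Set.mem_preimage.2 (hvsub hx), hxw⟩
      calc volume (f ⁻¹' (cyl β v)) ≤
            volume (cyl β (Fin.append w v)) + volume (f ⁻¹' (Set.Ico (0:ℝ) 1) \ cyl β w) :=
              le_trans (measure_mono hcover) (measure_union_le _ _)
        _ = volume (cyl β (Fin.append w v)) := by rw [hnull, add_zero]
  have hfinal : volume (cyl β (Fin.append w v)) = ENNReal.ofReal (1 / β ^ (n + m)) := by
    rw [hvol, hvolpre, hv.2, ← ENNReal.ofReal_mul (by positivity)]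
    congr 1
    rw [pow_add]
    field_simp
  refine ⟨?_, hfinal⟩
  -- admissibility: the cylinder is nonempty
  have hne : (cyl β (Fin.append w v)).Nonempty := by
    apply nonempty_of_measure_ne_zero (μ := volume)
    rw [hfinal]
    simp only [ne_eq, ENNReal.ofReal_eq_zero, not_le]
    positivity
  obtain ⟨x, hx⟩ := hne
  exact ⟨x, hx.1, fun i => (hx.2 i).symm⟩
end

section
/- Fix x ∈ (0,1]. For any word w ∈ Ω_n(x) with β(w) > 1 (where β(w) is the unique root β > 1 of x = Σ_{i=1}^n w_i β^{-i}), the β(w)-expansion of x equals w0^∞. -/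
open MeasureTheory Set
open scoped Classical

lemma fract_eq_sub_natFloor {y : ℝ} (hy : 0 ≤ y) : Int.fract y = y - ⌊y⌋₊ := by
  have h : ((⌊y⌋₊ : ℕ) : ℝ) = ((⌊y⌋ : ℤ) : ℝ) := by
    rw [← Int.floor_toNat]
    exact_mod_cast congrArg (fun z : ℤ => (z : ℝ)) (Int.toNat_of_nonneg (Int.floor_nonneg.2 hy))
  rw [Int.fract, h]

theorem expansion_at_root (x : ℝ) (hx : x ∈ Set.Ioc (0:ℝ) 1) (n : ℕ)
    (w : Fin n → ℕ) (hw : w ∈ prefWords x n) (βw : ℝ) (hβw : 1 < βw)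
    (hroot : x = ∑ i : Fin n, (w i : ℝ) / βw ^ ((i : ℕ) + 1)) :
    ∀ k : ℕ, betaDigit βw x k = if h : k < n then w ⟨k, h⟩ else 0 := by
  obtain ⟨β, hβ, hdig⟩ := hw
  have hβ0 : (0:ℝ) < β := lt_trans one_pos hβ
  have hβw0 : (0:ℝ) < βw := lt_trans one_pos hβw
  set W : ℕ → ℕ := fun i => if h : i < n then w ⟨i, h⟩ else 0 with hW
  set t : ℕ → ℝ := fun k => (betaT β)^[k] x with ht
  have htsucc : ∀ k, t (k+1) = Int.fract (β * t k) := by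
    intro k
    simp only [ht, Function.iterate_succ_apply', betaT]
  have ht0 : ∀ k, 0 ≤ t k := by
    intro k
    cases k with
    | zero => exact hx.1.le
    | succ k => rw [htsucc]; exact Int.fract_nonneg _
  have ht1 : ∀ k, t (k+1) < 1 := fun k => by rw [htsucc]; exact Int.fract_lt_one _
  have hdigW : ∀ k, k < n → (W k : ℝ) = ⌊β * t k⌋₊ := by
    intro k hk
    have := hdig ⟨k, hk⟩
    simp only [hW, dif_pos hk]
    rw [this]
    rfl
  have hstep : ∀ k, k < n → t (k+1) = β * t k - W k := by
    intro k hk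
    rw [htsucc, fract_eq_sub_natFloor (mul_nonneg hβ0.le (ht0 k)), hdigW k hk]
  have hpart : ∀ k, k ≤ n → x = (∑ i ∈ Finset.range k, (W i : ℝ)/β^(i+1)) + t k / β^k := by
    intro k
    induction k with
    | zero => intro _; simp [ht]
    | succ k ih =>
        intro hk
        have hk' : k < n := hk
        have hβk : (β:ℝ)^k ≠ 0 := (pow_pos hβ0 k).ne'
        have hb : t k / β ^ k = ((W k : ℝ))/β^(k+1) + t (k+1)/β^(k+1) := by
          rw [hstep k hk', pow_succ]
          field_simp
          ring
        rw [Finset.sum_range_succ]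
        rw [ih hk'.le] at *
        linarith
  have hsum_le : ∑ i ∈ Finset.range n, (W i : ℝ)/β^(i+1) ≤ x := by
    have h := hpart n le_rfl
    have : 0 ≤ t n / β^n := div_nonneg (ht0 n) (pow_pos hβ0 n).le
    linarith
  have hroot' : x = ∑ i ∈ Finset.range n, (W i : ℝ)/βw^(i+1) := by
    rw [hroot, ← Fin.sum_univ_eq_sum_range (fun i => (W i : ℝ)/βw^(i+1))]
    apply Finset.sum_congr rfl
    intro i _
    simp only [hW, dif_pos i.isLt, Fin.eta]
  have hβle : βw ≤ β := by
    by_contra hc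
    push_neg at hc
    obtain ⟨i0, hi0n, hi0⟩ : ∃ i ∈ Finset.range n, 0 < (W i : ℝ) := by
      by_contra hall
      push_neg at hall
      have hz : ∀ i ∈ Finset.range n, (W i : ℝ)/βw^(i+1) = 0 := by
        intro i hi
        have h1 : (W i : ℝ) ≤ 0 := hall i hi
        have h2 : (0:ℝ) ≤ (W i : ℝ) := Nat.cast_nonneg _
        rw [le_antisymm h1 h2, zero_div]
      have : x = 0 := by rw [hroot']; exact Finset.sum_eq_zero hz
      linarith [hx.1]
    have hlt : ∑ i ∈ Finset.range n, (W i : ℝ)/βw^(i+1)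
        < ∑ i ∈ Finset.range n, (W i : ℝ)/β^(i+1) := by
      apply Finset.sum_lt_sum
      · intro i _
        apply div_le_div_of_nonneg_left (Nat.cast_nonneg _) (pow_pos hβ0 _)
        exact pow_le_pow_left₀ hβ0.le hc.le _
      · refine ⟨i0, hi0n, ?_⟩
        exact div_lt_div_of_pos_left hi0 (pow_pos hβ0 _)
          (pow_lt_pow_left₀ hc hβ0.le (Nat.succ_ne_zero _))
    rw [← hroot'] at hlt
    linarith
  set S : ℕ → ℝ := fun k => ∑ i ∈ Finset.Ico k n, (W i : ℝ)/βw^(i+1) with hS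
  set r : ℕ → ℝ := fun k => βw^k * S k with hr
  have hSnn : ∀ k, 0 ≤ S k := by
    intro k
    apply Finset.sum_nonneg
    intro i _
    positivity
  have hrnn : ∀ k, 0 ≤ r k := fun k => mul_nonneg (pow_pos hβw0 k).le (hSnn k)
  have hr0 : r 0 = x := by
    simp only [hr, hS, pow_zero, one_mul]
    rw [hroot', Finset.range_eq_Ico]
  have hrstep : ∀ k, k < n → r (k+1) = βw * r k - W k := by
    intro k hk
    have hSk : S k = (W k : ℝ)/βw^(k+1) + S (k+1) :=
      Finset.sum_eq_sum_Ico_succ_bot hk _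
    simp only [hr, hSk]
    have : (βw:ℝ)^(k+1) ≠ 0 := (pow_pos hβw0 _).ne'
    field_simp
    ring
  have hrn : r n = 0 := by simp [hr, hS]
  have main : ∀ k, k ≤ n → (betaT βw)^[k] x = r k ∧ r k ≤ t k := by
    intro k
    induction k with
    | zero =>
        intro _
        refine ⟨by simp [hr0], ?_⟩
        rw [hr0]
        simp [ht]
    | succ k ih =>
        intro hk
        have hk' : k < n := hk
        obtain ⟨hit, hle⟩ := ih hk'.le
        have h1 : r (k+1) ≤ t (k+1) := by
          rw [hrstep k hk', hstep k hk']
          have : βw * r k ≤ β * t k := mul_le_mul hβle hle (hrnn k) hβ0.le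
          linarith
        have h2 : r (k+1) < 1 := lt_of_le_of_lt h1 (ht1 k)
        have h3 : 0 ≤ r (k+1) := hrnn (k+1)
        have heq : βw * r k = (W k : ℝ) + r (k+1) := by rw [hrstep k hk']; ring
        have hfloor : ⌊βw * r k⌋₊ = W k := by
          rw [heq, Nat.floor_eq_iff (by positivity)]
          constructor
          · linarith
          · linarith
        refine ⟨?_, h1⟩
        rw [Function.iterate_succ_apply', hit]
        show Int.fract (βw * r k) = r (k+1)
        rw [fract_eq_sub_natFloor (mul_nonneg hβw0.le (hrnn k)), hfloor, heq]
        ring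
  intro k
  by_cases hk : k < n
  · rw [dif_pos hk]
    have hit := (main k hk.le).1
    have hk1 : k + 1 ≤ n := hk
    have h1 : r (k+1) ≤ t (k+1) := (main (k+1) hk1).2
    have h2 : r (k+1) < 1 := lt_of_le_of_lt h1 (ht1 k)
    have h3 : 0 ≤ r (k+1) := hrnn (k+1)
    have heq : βw * r k = (W k : ℝ) + r (k+1) := by rw [hrstep k hk]; ring
    have hfloor : ⌊βw * r k⌋₊ = W k := by
      rw [heq, Nat.floor_eq_iff (by positivity)]
      constructor
      · linarith
      · linarith
    show ⌊βw * (betaT βw)^[k] x⌋₊ = _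
    rw [hit, hfloor]
    simp only [hW, dif_pos hk]
  · rw [dif_neg hk]
    push_neg at hk
    have hzero : ∀ m, (betaT βw)^[n + m] x = 0 := by
      intro m
      induction m with
      | zero => simpa [hrn] using (main n le_rfl).1
      | succ m ih =>
          rw [← add_assoc, Function.iterate_succ_apply', ih]
          simp [betaT]
    obtain ⟨m, rfl⟩ := Nat.exists_eq_add_of_le hk
    show ⌊βw * (betaT βw)^[n + m] x⌋₊ = 0
    rw [hzero m]
    simp
end

section
/- Fix x ∈ (0,1]. For every n ≥ 1 and w ∈ Ω_n(x), the parameter cylinder I(w) = {β > 1 : ε_1(x,β)⋯ε_n(x,β) = w} is an interval whose length satisfies |I(w)| ≤ x^{-1} (β̄(w))^{1−n}, where β̄(w) = sup I(w). -/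
open MeasureTheory Set
open scoped Classical

theorem pcyl_interval_length (x : ℝ) (hx : x ∈ Set.Ioc (0:ℝ) 1) (n : ℕ) (hn : 1 ≤ n)
    (w : Fin n → ℕ) (hw : w ∈ prefWords x n) :
    (pcyl x w).OrdConnected ∧
      volume (pcyl x w) ≤ ENNReal.ofReal (x⁻¹ * (sSup (pcyl x w)) ^ ((1 : ℤ) - n)) := by
  obtain ⟨β0, hβ01, hβ0w⟩ := hw
  have hx0 : 0 < x := hx.1
  -- basic facts about the iterates
  have hRnn : ∀ (β : ℝ) (m : ℕ), 0 ≤ (betaT β)^[m] x := by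
    intro β m
    cases m with
    | zero => simpa using hx0.le
    | succ m =>
      rw [Function.iterate_succ_apply']
      exact Int.fract_nonneg _
  have hRlt : ∀ (β : ℝ) (m : ℕ), 1 ≤ m → (betaT β)^[m] x < 1 := by
    intro β m hm
    obtain ⟨k, rfl⟩ := Nat.exists_eq_add_of_le hm
    rw [add_comm, Function.iterate_succ_apply']
    exact Int.fract_lt_one _
  have hstep : ∀ (β : ℝ), 0 ≤ β → ∀ m : ℕ,
      (betaT β)^[m+1] x = β * (betaT β)^[m] x - (betaDigit β x m : ℝ) := by
    intro β hβ m
    rw [Function.iterate_succ_apply']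
    have h0 : (0:ℝ) ≤ β * (betaT β)^[m] x := mul_nonneg hβ (hRnn β m)
    show Int.fract (β * (betaT β)^[m] x) = _
    rw [Int.fract]
    congr 1
    unfold betaDigit
    exact_mod_cast (Int.natCast_floor_eq_floor h0).symm
  -- main monotonicity / digit-matching induction
  have key : ∀ a, a ∈ pcyl x w → ∀ b, b ∈ pcyl x w → a ≤ b → ∀ m : ℕ, m ≤ n →
      ∀ γ δ : ℝ, γ ∈ Set.Icc a b → δ ∈ Set.Icc a b → γ ≤ δ →
        (∀ j : ℕ, ∀ hj : j < n, j < m → betaDigit γ x j = w ⟨j, hj⟩) ∧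
        (betaT γ)^[m] x ≤ (betaT δ)^[m] x := by
    intro a ha b hb hab m
    induction m with
    | zero =>
      intro _ γ δ _ _ _
      exact ⟨fun j hj h => absurd h (Nat.not_lt_zero j), by simp⟩
    | succ m ih =>
      intro hm γ δ hγ hδ hγδ
      have hm' : m ≤ n := Nat.le_of_succ_le hm
      have hmn : m < n := hm
      have ha1 : (1:ℝ) < a := ha.1
      have ha0 : (0:ℝ) ≤ a := by linarith
      have hγ0 : (0:ℝ) ≤ γ := by have := hγ.1; linarith
      have hδ0 : (0:ℝ) ≤ δ := by have := hδ.1; linarith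
      have hb0 : (0:ℝ) ≤ b := by linarith
      have iγδ := ih hm' γ δ hγ hδ hγδ
      have iaγ := ih hm' a γ (Set.left_mem_Icc.2 hab) hγ hγ.1
      have iδb := ih hm' δ b hδ (Set.right_mem_Icc.2 hab) hδ.2
      -- products are ordered
      have paγ : a * (betaT a)^[m] x ≤ γ * (betaT γ)^[m] x :=
        mul_le_mul hγ.1 iaγ.2 (hRnn a m) hγ0
      have pγδ : γ * (betaT γ)^[m] x ≤ δ * (betaT δ)^[m] x :=
        mul_le_mul hγδ iγδ.2 (hRnn γ m) hδ0
      have pδb : δ * (betaT δ)^[m] x ≤ b * (betaT b)^[m] x :=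
        mul_le_mul hδ.2 iδb.2 (hRnn δ m) hb0
      have hda : betaDigit a x m = w ⟨m, hmn⟩ := ha.2 ⟨m, hmn⟩
      have hdb : betaDigit b x m = w ⟨m, hmn⟩ := hb.2 ⟨m, hmn⟩
      have hdγ : betaDigit γ x m = w ⟨m, hmn⟩ := by
        have h1 : betaDigit a x m ≤ betaDigit γ x m :=
          Nat.floor_le_floor paγ
        have h2 : betaDigit γ x m ≤ betaDigit b x m :=
          Nat.floor_le_floor (pγδ.trans pδb)
        omega
      have hdδ : betaDigit δ x m = w ⟨m, hmn⟩ := by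
        have h1 : betaDigit a x m ≤ betaDigit δ x m :=
          Nat.floor_le_floor (paγ.trans pγδ)
        have h2 : betaDigit δ x m ≤ betaDigit b x m :=
          Nat.floor_le_floor pδb
        omega
      constructor
      · intro j hj hjm
        rcases Nat.lt_succ_iff_lt_or_eq.1 hjm with h | rfl
        · exact iγδ.1 j hj h
        · exact hdγ
      · rw [hstep γ hγ0 m, hstep δ hδ0 m, hdγ, hdδ]
        exact sub_le_sub_right pγδ _
  -- quantitative estimate
  have quant : ∀ a, a ∈ pcyl x w → ∀ b, b ∈ pcyl x w → a ≤ b → ∀ m : ℕ, 1 ≤ m → m ≤ n →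
      (b - a) * (x * b ^ (m - 1)) ≤ (betaT b)^[m] x - (betaT a)^[m] x := by
    intro a ha b hb hab m
    induction m with
    | zero => intro h; exact absurd h (by omega)
    | succ m ih =>
      intro _ hmn
      have ha1 : (1:ℝ) < a := ha.1
      have ha0 : (0:ℝ) ≤ a := by linarith
      have hb1 : (1:ℝ) < b := hb.1
      have hb0 : (0:ℝ) ≤ b := by linarith
      have hmn' : m < n := hmn
      have hda : betaDigit a x m = w ⟨m, hmn'⟩ := ha.2 ⟨m, hmn'⟩
      have hdb : betaDigit b x m = w ⟨m, hmn'⟩ := hb.2 ⟨m, hmn'⟩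
      rcases Nat.eq_zero_or_pos m with rfl | hm1
    
      · rw [hstep a ha0 0, hstep b hb0 0, hda, hdb]
        simp only [Function.iterate_zero_apply, Nat.zero_add]
        ring_nf
        nlinarith [hx0, hab]
      · have ihm := ih hm1 (le_of_lt hmn')
        rw [hstep a ha0 m, hstep b hb0 m, hda, hdb]
        have hRa : 0 ≤ (betaT a)^[m] x := hRnn a m
        have hbm : b ^ (m - 1) * b = b ^ m := by
          rw [← pow_succ]
          congr 1
          omega
        have h1 : (b - a) * (x * b ^ m) ≤ b * ((betaT b)^[m] x - (betaT a)^[m] x) := by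
          calc (b - a) * (x * b ^ m) = b * ((b - a) * (x * b ^ (m-1))) := by
                rw [← hbm]; ring
            _ ≤ b * ((betaT b)^[m] x - (betaT a)^[m] x) :=
                mul_le_mul_of_nonneg_left ihm hb0
        have h2 : 0 ≤ (b - a) * (betaT a)^[m] x := mul_nonneg (by linarith) hRa
        have hm0 : m + 1 - 1 = m := by omega
        rw [hm0]
        nlinarith [h1, h2]
  -- the pairwise bound
  have pair : ∀ a, a ∈ pcyl x w → ∀ b, b ∈ pcyl x w → a ≤ b →
      b - a < x⁻¹ * b ^ ((1:ℤ) - n) := by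
    intro a ha b hb hab
    have hq := quant a ha b hb hab n hn le_rfl
    have hb1 : (1:ℝ) < b := hb.1
    have hb0 : (0:ℝ) < b := by linarith
    have hlt : (b - a) * (x * b ^ (n-1)) < 1 := by
      have := hRlt b n hn
      have := hRnn a n
      linarith
    have hpos : 0 < x * b ^ (n - 1) := by positivity
    have hz : b ^ ((1:ℤ) - n) = (b ^ (n-1 : ℕ))⁻¹ := by
      rw [show (1:ℤ) - n = -((n-1:ℕ):ℤ) by omega, zpow_neg, zpow_natCast]
    rw [hz]
    calc b - a < 1 / (x * b ^ (n-1)) := (lt_div_iff₀ hpos).2 (by linarith)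
      _ = x⁻¹ * (b ^ (n-1:ℕ))⁻¹ := by
        rw [one_div, mul_inv]
  -- ord-connectedness
  have hβ0 : β0 ∈ pcyl x w := ⟨hβ01, fun i => (hβ0w i).symm⟩
  have hord : (pcyl x w).OrdConnected := by
    refine Set.ordConnected_of_Ioo ?_
    intro a ha b hb hab c hc
    have hc' : c ∈ Set.Icc a b := ⟨hc.1.le, hc.2.le⟩
    refine ⟨lt_of_lt_of_le ha.1 hc'.1, fun i => ?_⟩
    have := (key a ha b hb (le_of_lt hab) n le_rfl c c hc' hc' le_rfl).1 i i.isLt i.isLt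
    simpa using this
  refine ⟨hord, ?_⟩
  -- sup and volume bound
  set s := pcyl x w with hs
  have hne : s.Nonempty := ⟨β0, hβ0⟩
  have hbdd : BddAbove s := by
    refine ⟨((w ⟨0, hn⟩ : ℝ) + 1) / x, fun β hβ => ?_⟩
    have hd : betaDigit β x 0 = w ⟨0, hn⟩ := hβ.2 ⟨0, hn⟩
    have h1 : β * x < (w ⟨0, hn⟩ : ℝ) + 1 := by
      have h2 := Nat.lt_floor_add_one (β * x)
      have : betaDigit β x 0 = ⌊β * x⌋₊ := by
        unfold betaDigit; rw [Function.iterate_zero_apply]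
      rw [this] at hd
      rw [hd] at h2
      exact_mod_cast h2
    rw [le_div_iff₀ hx0]
    linarith
  set B := sSup s with hB
  have hβ0B : β0 ≤ B := le_csSup hbdd hβ0
  have hB1 : (1:ℝ) < B := lt_of_lt_of_le hβ01 hβ0B
  have hB0 : (0:ℝ) < B := by linarith
  set φ : ℝ → ℝ := fun t => t - x⁻¹ * t ^ ((1:ℤ) - n) with hφ
  have hφle : ∀ a, a ∈ s → ∀ b, b ∈ s → φ b ≤ a := by
    intro a ha b hb
    have hb1 : (1:ℝ) < b := hb.1
    have hb0 : (0:ℝ) < b := by linarith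
    have hcpos : 0 < x⁻¹ * b ^ ((1:ℤ) - n) := by positivity
    rcases le_or_gt b a with h | h
    · have : φ b ≤ b := by simp only [hφ]; linarith
      linarith
    · have := pair a ha b hb h.le
      simp only [hφ]; linarith
  have hlow : ∀ a, a ∈ s → φ B ≤ a := by
    intro a ha
    refine le_of_forall_sub_le ?_
    intro ε hε
    have hcont : ContinuousAt φ B := by
      exact (continuousAt_id).sub
        (continuousAt_const.mul (continuousAt_zpow₀ B _ (Or.inl (ne_of_gt hB0))))
    rw [Metric.continuousAt_iff] at hcont
    obtain ⟨δ, hδ0, hδ⟩ := hcont ε hε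
    obtain ⟨b, hbs, hbB⟩ := exists_lt_of_lt_csSup hne (by linarith : B - δ < B)
    have hbB' : b ≤ B := le_csSup hbdd hbs
    have hdist : dist b B < δ := by
      rw [Real.dist_eq, abs_sub_lt_iff]; constructor <;> linarith
    have := hδ hdist
    rw [Real.dist_eq, abs_sub_lt_iff] at this
    have hb := hφle a ha b hbs
    linarith [this.2]
  have hsub : s ⊆ Set.Icc (φ B) B := fun β hβ => ⟨hlow β hβ, le_csSup hbdd hβ⟩
  calc volume s ≤ volume (Set.Icc (φ B) B) := measure_mono hsub
    _ = ENNReal.ofReal (B - φ B) := Real.volume_Icc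
    _ = ENNReal.ofReal (x⁻¹ * B ^ ((1:ℤ) - n)) := by
        congr 1
        simp only [hφ]
        ring
end
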